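/- arXiv:1909.03574 — 6 statements merged into one kernel-verified Lean document; each statement's English description precedes it below -/
import Mathlib

section
/- Assume (A0) and (A1), and fix D with G_{≤0} ⊆ D ⊆ G and w ∈ ℝ^G. For a restricted strategy φ̃ = (I, δ̃) with I ⊆ G_{<0} and δ̃ ∈ Z̃, let Ψ̃ be the diagonal matrix on D with diagonal the indicator of I, and define A(φ̃) := −(Ĩd − Ψ̃)L̃ + Ψ̃(Ĩd − B̃(δ̃)), where Ĩd := Id_{DD}. Then A(φ̃) is a WCDD L0-matrix; in particular it is nonsingular and its inverse is entrywise nonnegative. -/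
open Matrix Finset Filter Topology

noncomputable section

section MatrixDefs

variable {n : Type*} [Fintype n] [DecidableEq n]

/-- A Z-matrix: nonpositive off-diagonal entries. -/
def IsZMatrix (A : Matrix n n ℝ) : Prop := ∀ i j, i ≠ j → A i j ≤ 0

/-- An L0-matrix: a Z-matrix with nonnegative diagonal entries. -/
def IsL0Matrix (A : Matrix n n ℝ) : Prop := IsZMatrix A ∧ ∀ i, 0 ≤ A i i

/-- Row `i` of `A` is strictly diagonally dominant. -/
def SDDRow (A : Matrix n n ℝ) (i : n) : Prop :=
  ∑ j ∈ Finset.univ.erase i, |A i j| < |A i i|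

/-- Row `i` of `A` is weakly diagonally dominant. -/
def WDDRow (A : Matrix n n ℝ) (i : n) : Prop :=
  ∑ j ∈ Finset.univ.erase i, |A i j| ≤ |A i i|

def IsWDD (A : Matrix n n ℝ) : Prop := ∀ i, WDDRow A i

def IsSDD (A : Matrix n n ℝ) : Prop := ∀ i, SDDRow A i

/-- A (nonempty) walk in the directed graph of `A` (edge `a → b` iff `A a b ≠ 0`). -/
def MWalk (A : Matrix n n ℝ) (i j : n) : Prop :=
  Relation.TransGen (fun a b => A a b ≠ 0) i j

/-- Weakly chained diagonally dominant matrix. -/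
def IsWCDD (A : Matrix n n ℝ) : Prop :=
  IsWDD A ∧ ∀ i, ¬ SDDRow A i → ∃ j, SDDRow A j ∧ MWalk A i j

/-- Substochastic matrix: nonnegative entries and row sums at most one. -/
def IsSubstochastic (A : Matrix n n ℝ) : Prop :=
  (∀ i j, 0 ≤ A i j) ∧ ∀ i, ∑ j, A i j ≤ 1

end MatrixDefs

/-- The data of a (discretized) symmetric nonzero-sum impulse game on the symmetric grid
`x (-N) < … < x 0 = 0 < … < x N`, indexed here by `Fin (2*N+1)` (so that index `N`
corresponds to the grid point `0`, and `Fin.rev` is the reflection `x ↦ -x`). -/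
structure GameSetup (N : ℕ) where
  x : Fin (2*N+1) → ℝ
  hx_mono : StrictMono x
  hx_sym : ∀ i, x i.rev = -(x i)
  Z : Fin (2*N+1) → Finset ℝ
  hZ_ne : ∀ i, (Z i).Nonempty
  hZ_nonneg : ∀ i, ∀ d ∈ Z i, 0 ≤ d
  hZ_zero : ∀ i, 0 ≤ x i → Z i = {0}
  B : (Fin (2*N+1) → ℝ) → Matrix (Fin (2*N+1)) (Fin (2*N+1)) ℝ
  c : (Fin (2*N+1) → ℝ) → Fin (2*N+1) → ℝ
  g : (Fin (2*N+1) → ℝ) → Fin (2*N+1) → ℝ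
  hB_rd : ∀ δ δ' i, δ i = δ' i → B δ i = B δ' i
  hc_rd : ∀ δ δ' i, δ i = δ' i → c δ i = c δ' i
  hg_rd : ∀ δ δ' i, δ i = δ' i → g δ i = g δ' i
  hc_pos : ∀ δ, (∀ i, δ i ∈ Z i) → ∀ i, 0 < c δ i
  L : Matrix (Fin (2*N+1)) (Fin (2*N+1)) ℝ
  f : Fin (2*N+1) → ℝ

variable {N : ℕ}

/-- The symmetry (permutation) matrix `S v (x) = v (-x)`. -/
def Smat (N : ℕ) : Matrix (Fin (2*N+1)) (Fin (2*N+1)) ℝ :=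
  Matrix.of fun i j => if j = i.rev then (1:ℝ) else 0

namespace GameSetup

variable (s : GameSetup N)

/-- Admissible impulse functions: `δ i ∈ Z i` for all grid points. -/
def Adm (δ : Fin (2*N+1) → ℝ) : Prop := ∀ i, δ i ∈ s.Z i

/-- The discrete loss operator `M v = max_{δ ∈ Z} (B δ v - c δ)` (entrywise, using
row-decoupledness to maximize row by row). -/
def M (v : Fin (2*N+1) → ℝ) (i : Fin (2*N+1)) : ℝ :=
  (s.Z i).sup' (s.hZ_ne i) fun d => (s.B fun _ => d).mulVec v i - s.c (fun _ => d) i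

/-- `δstar v i`: the largest impulse in `Z i` attaining the maximum defining `M v i`. -/
def δstar (v : Fin (2*N+1) → ℝ) (i : Fin (2*N+1)) : ℝ :=
  WithBot.unbotD 0 ((s.Z i).filter fun d =>
    (s.B fun _ => d).mulVec v i - s.c (fun _ => d) i = s.M v i).max

/-- The discrete gain operator `H v = S B(δ*(v)) S v + g (S δ*(v))`. -/
def H (v : Fin (2*N+1) → ℝ) : Fin (2*N+1) → ℝ :=
  (Smat N * s.B (s.δstar v) * Smat N).mulVec v + s.g (s.δstar v ∘ Fin.rev)

/-- A (discrete) strategy: an intervention region `I ⊆ G_{<0}` and an admissible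
impulse function. -/
structure Strategy where
  I : Finset (Fin (2*N+1))
  δ : Fin (2*N+1) → ℝ
  hI : ∀ i ∈ I, s.x i < 0
  hδ : ∀ i, δ i ∈ s.Z i

/-- The diagonal indicator matrix of the intervention region of a strategy. -/
def Psi (φ : s.Strategy) : Matrix (Fin (2*N+1)) (Fin (2*N+1)) ℝ :=
  Matrix.diagonal fun i => if i ∈ φ.I then (1:ℝ) else 0

/-- `𝔸(φ,φ̄) = Id − (Id − Ψ̄ − SΨS)(Id + L) − Ψ̄ B(δ̄)`. -/
def Amat (φ φ' : s.Strategy) : Matrix (Fin (2*N+1)) (Fin (2*N+1)) ℝ :=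
  1 - (1 - s.Psi φ' - Smat N * s.Psi φ * Smat N) * (1 + s.L) - s.Psi φ' * s.B φ'.δ

/-- `𝔹(φ) = S Ψ B(δ) S`. -/
def Bmat (φ : s.Strategy) : Matrix (Fin (2*N+1)) (Fin (2*N+1)) ℝ :=
  Smat N * s.Psi φ * s.B φ.δ * Smat N

/-- `ℂ(φ,φ̄) = (Id − Ψ̄ − SΨS) f − Ψ̄ c(δ̄) + SΨS g(Sδ)`. -/
def Cvec (φ φ' : s.Strategy) : Fin (2*N+1) → ℝ :=
  (1 - s.Psi φ' - Smat N * s.Psi φ * Smat N).mulVec s.f - (s.Psi φ').mulVec (s.c φ'.δ)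
    + (Smat N * s.Psi φ * Smat N).mulVec (s.g (φ.δ ∘ Fin.rev))

/-- Assumption (A0). -/
def A0 : Prop := ∀ φ : s.Strategy, ∀ i ∈ φ.I, ∃ j, j ∉ φ.I ∧ MWalk (s.B φ.δ) i j

/-- Assumption (A1). -/
def A1 : Prop :=
  (IsSDD (-s.L) ∧ IsL0Matrix (-s.L)) ∧
    ∀ δ, s.Adm δ → IsWDD (1 - s.B δ) ∧ IsL0Matrix (1 - s.B δ)

/-- Assumption (A2). -/
def A2 : Prop := ∀ δ, s.Adm δ → ∀ i, 0 ≤ s.B δ i i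

/-- Assumption (A0'). -/
def A0' : Prop :=
  ∀ φ φ' : s.Strategy, ∀ i, (i ∈ φ'.I ∨ i.rev ∈ φ.I) →
    ∃ j, ¬(j ∈ φ'.I ∨ j.rev ∈ φ.I) ∧
      MWalk (s.Psi φ' * s.B φ'.δ + Smat N * s.Psi φ * s.B φ.δ * Smat N) i j

/-- Identity-row condition: zero impulse gives the corresponding identity row. -/
def IdRow : Prop :=
  ∀ δ, s.Adm δ → ∀ i, δ i = 0 →
    s.B δ i = (1 : Matrix (Fin (2*N+1)) (Fin (2*N+1)) ℝ) i

/-- The discrete QVI system: `Mv − v ≤ 0` on `G`, `Hv − v = 0` on `−I*(v)`, and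
`max{Lv + f, Mv − v} = 0` on `−C*(v)`. -/
def SolvesQVI (v : Fin (2*N+1) → ℝ) : Prop :=
  (∀ i, s.M v i - v i ≤ 0) ∧
  (∀ i, s.M v i.rev - v i.rev = 0 → s.H v i - v i = 0) ∧
  (∀ i, s.M v i.rev - v i.rev < 0 →
    max (s.L.mulVec v i + s.f i) (s.M v i - v i) = 0)

/-- The intervention region induced by a payoff `v`. -/
def indI (v : Fin (2*N+1) → ℝ) : Finset (Fin (2*N+1)) :=
  Finset.univ.filter fun i => s.x i < 0 ∧ s.L.mulVec v i + s.f i ≤ s.M v i - v i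

/-- `φ` is the strategy induced by the payoff `v`. -/
def IsInduced (v : Fin (2*N+1) → ℝ) (φ : s.Strategy) : Prop :=
  φ.I = s.indI v ∧ φ.δ = s.δstar v

/-- An algorithm sequence: payoffs `v^k` with induced strategies `φ^k` satisfying the
fixed-point recurrence `𝔸(φ^k,φ^{k+1}) v^{k+1} = 𝔹(φ^k) v^k + ℂ(φ^k,φ^{k+1})`. -/
def IsAlgSeq (v : ℕ → Fin (2*N+1) → ℝ) (φ : ℕ → s.Strategy) : Prop :=
  (∀ k, s.IsInduced (v k) (φ k)) ∧
  ∀ k, (s.Amat (φ k) (φ (k+1))).mulVec (v (k+1)) =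
    (s.Bmat (φ k)).mulVec (v k) + s.Cvec (φ k) (φ (k+1))

/-- The discrete unique impulse property. -/
def UIP (v : Fin (2*N+1) → ℝ) : Prop :=
  ∀ i, s.M v i = v i →
    ∃! d, d ∈ s.Z i ∧ (s.B fun _ => d).mulVec v i - s.c (fun _ => d) i = s.M v i

end GameSetup

/-- Restricted matrix `L̃ = L_{DD}`. -/
def Ltil (s : GameSetup N) (D : Finset (Fin (2*N+1))) :
    Matrix {i // i ∈ D} {i // i ∈ D} ℝ :=
  s.L.submatrix Subtype.val Subtype.val

/-- Restricted right-hand side `f̃ = f_D + L_{D Dᶜ} w_{Dᶜ}`. -/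
def ftil (s : GameSetup N) (D : Finset (Fin (2*N+1))) (w : Fin (2*N+1) → ℝ)
    (i : {i // i ∈ D}) : ℝ :=
  s.f i.val + ∑ j ∈ Dᶜ, s.L i.val j * w j

/-- Value of `B̃(δ̃) ṽ − c̃(δ̃)` in row `i` for the fixed impulse `d ∈ Z i`, where
`B̃(δ̃) = B(δ̃)_{DD}` and `c̃(δ̃) = c(δ̃)_D − B(δ̃)_{D Dᶜ} w_{Dᶜ}`. -/
def MtilVal (s : GameSetup N) (D : Finset (Fin (2*N+1))) (w : Fin (2*N+1) → ℝ)
    (d : ℝ) (vt : {i // i ∈ D} → ℝ) (i : {i // i ∈ D}) : ℝ :=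
  (∑ j : {i // i ∈ D}, s.B (fun _ => d) i.val j.val * vt j)
    - (s.c (fun _ => d) i.val - ∑ j ∈ Dᶜ, s.B (fun _ => d) i.val j * w j)

/-- The restricted loss operator `M̃ ṽ = max_{δ̃ ∈ Z̃} {B̃(δ̃) ṽ − c̃(δ̃)}`. -/
def Mtil (s : GameSetup N) (D : Finset (Fin (2*N+1))) (w : Fin (2*N+1) → ℝ)
    (vt : {i // i ∈ D} → ℝ) (i : {i // i ∈ D}) : ℝ :=
  (s.Z i.val).sup' (s.hZ_ne i.val) fun d => MtilVal s D w d vt i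

/-- Restricted impulse matrix `B̃(δ̃) = B(δ̃)_{DD}` (well defined by row-decoupledness). -/
def Btil (s : GameSetup N) (D : Finset (Fin (2*N+1))) (δt : {i // i ∈ D} → ℝ) :
    Matrix {i // i ∈ D} {i // i ∈ D} ℝ :=
  Matrix.of fun i j => s.B (fun _ => δt i) i.val j.val

/-- The diagonal indicator matrix `Ψ̃` of a restricted intervention region. -/
def PsiD {N : ℕ} (D : Finset (Fin (2*N+1))) (I : Finset {i // i ∈ D}) :
    Matrix {i // i ∈ D} {i // i ∈ D} ℝ :=
  Matrix.diagonal fun i => if i ∈ I then (1:ℝ) else 0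

/-- The policy matrix `A(φ̃) = −(Ĩd − Ψ̃) L̃ + Ψ̃ (Ĩd − B̃(δ̃))`. -/
def Apolicy (s : GameSetup N) (D : Finset (Fin (2*N+1)))
    (I : Finset {i // i ∈ D}) (δt : {i // i ∈ D} → ℝ) :
    Matrix {i // i ∈ D} {i // i ∈ D} ℝ :=
  -((1 - PsiD D I) * Ltil s D) + PsiD D I * (1 - Btil s D δt)

section AuxWCDD
variable {n : Type*} [Fintype n] [DecidableEq n]

theorem wcdd_mulVec_nonneg (A : Matrix n n ℝ) (hW : IsWCDD A) (hL : IsL0Matrix A)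
    (x : n → ℝ) (hx : ∀ i, 0 ≤ A.mulVec x i) : ∀ i, 0 ≤ x i := by
  by_contra hcon
  push_neg at hcon
  obtain ⟨i0, hi0⟩ := hcon
  haveI : Nonempty n := ⟨i0⟩
  set m := (univ : Finset n).inf' univ_nonempty x with hm
  have hmle : ∀ j, m ≤ x j := fun j => inf'_le _ (mem_univ j)
  have hmneg : m < 0 := lt_of_le_of_lt (hmle i0) hi0
  -- main claim
  have claim : ∀ i, x i = m → ¬ SDDRow A i ∧ ∀ j, A i j ≠ 0 → x j = m := by
    intro i him
    have hAx : 0 ≤ ∑ j, A i j * x j := by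
      have := hx i
      simpa [Matrix.mulVec, dotProduct] using this
    have hsplit : ∑ j, A i j * x j = A i i * m + ∑ j ∈ univ.erase i, A i j * x j := by
      rw [← Finset.add_sum_erase _ _ (mem_univ i), him]
    have habs : ∀ j ∈ univ.erase i, |A i j| = -(A i j) := by
      intro j hj
      exact abs_of_nonpos (hL.1 i j (Finset.ne_of_mem_erase hj).symm)
    have hterm : ∀ j ∈ univ.erase i, A i j * x j ≤ A i j * m := by
      intro j hj
      exact mul_le_mul_of_nonpos_left (hmle j) (hL.1 i j (Finset.ne_of_mem_erase hj).symm)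
    have hT : ∑ j ∈ univ.erase i, A i j * m = -(∑ j ∈ univ.erase i, |A i j|) * m := by
      calc ∑ j ∈ univ.erase i, A i j * m
          = ∑ j ∈ univ.erase i, -(|A i j| * m) :=
            Finset.sum_congr rfl fun j hj => by rw [habs j hj]; ring
        _ = -(∑ j ∈ univ.erase i, |A i j|) * m := by
            rw [Finset.sum_neg_distrib, ← Finset.sum_mul]; ring
    set T := ∑ j ∈ univ.erase i, |A i j| with hTdef
    have hWDDi : T ≤ A i i := by
      have := hW.1 i
      rwa [WDDRow, abs_of_nonneg (hL.2 i)] at this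
    have hsum_le : ∑ j ∈ univ.erase i, A i j * x j ≤ -T * m :=
      le_trans (Finset.sum_le_sum hterm) (le_of_eq hT)
    have h1 : 0 ≤ A i i * m + -T * m := le_trans hAx (by rw [hsplit]; linarith)
    have h2 : (A i i - T) * m ≤ 0 :=
      mul_nonpos_of_nonneg_of_nonpos (by linarith) (le_of_lt hmneg)
    have heq : A i i = T := by
      rcases lt_or_eq_of_le hWDDi with h | h
      · exfalso; nlinarith
      · exact h.symm
    constructor
    · rw [SDDRow, abs_of_nonneg (hL.2 i), heq]; exact lt_irrefl T
    · intro j hAij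
      by_cases hji : j = i
      · rw [hji, him]
      have hsum0 : ∑ j ∈ univ.erase i, (A i j * x j - A i j * m) = 0 := by
        have hle : ∑ j ∈ univ.erase i, (A i j * x j - A i j * m) ≤ 0 := by
          apply Finset.sum_nonpos
          intro k hk; have := hterm k hk; linarith
        have hge : 0 ≤ ∑ j ∈ univ.erase i, (A i j * x j - A i j * m) := by
          rw [Finset.sum_sub_distrib]
          have : A i i * m = -(-T * m) := by rw [heq]; ring
          nlinarith [hAx, hsplit, hT]
        linarith
      have hall := (Finset.sum_eq_zero_iff_of_nonpos (fun k hk => by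
          have := hterm k hk; linarith)).1 hsum0 j (Finset.mem_erase.2 ⟨hji, mem_univ j⟩)
      have : A i j * (x j - m) = 0 := by linarith
      rcases mul_eq_zero.1 this with h | h
      · exact absurd h hAij
      · linarith
  obtain ⟨iw, _, hiw⟩ := Finset.exists_mem_eq_inf' (univ_nonempty) x
  have hxiw : x iw = m := hiw.symm
  obtain ⟨j, hjSDD, hwalk⟩ := hW.2 iw (claim iw hxiw).1
  have hprop : ∀ a b, MWalk A a b → x a = m → x b = m := by
    intro a b hab
    induction hab with
    | single h => exact fun ha => (claim a ha).2 _ h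
    | tail _ h ih => exact fun ha => (claim _ (ih ha)).2 _ h
  exact (claim j (hprop iw j hwalk hxiw)).1 hjSDD

theorem wcdd_det_isUnit (A : Matrix n n ℝ) (hW : IsWCDD A) (hL : IsL0Matrix A) :
    IsUnit A.det := by
  rw [isUnit_iff_ne_zero]
  intro hdet
  obtain ⟨v, hv, hAv⟩ := (Matrix.exists_mulVec_eq_zero_iff).2 hdet
  have h1 : ∀ i, 0 ≤ v i := wcdd_mulVec_nonneg A hW hL v (fun i => by rw [hAv]; exact le_refl 0)
  have h2 : ∀ i, 0 ≤ -v i := by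
    have : A.mulVec (-v) = 0 := by rw [Matrix.mulVec_neg, hAv, neg_zero]
    simpa using wcdd_mulVec_nonneg A hW hL (-v) (fun i => by rw [this]; exact le_refl 0)
  exact hv (funext fun i => by have := h1 i; have := h2 i; simp only [Pi.zero_apply]; linarith)

theorem wcdd_inv_nonneg (A : Matrix n n ℝ) (hW : IsWCDD A) (hL : IsL0Matrix A) :
    ∀ i j, 0 ≤ A⁻¹ i j := by
  intro i j
  have hdet := wcdd_det_isUnit A hW hL
  have hmul : A * A⁻¹ = 1 := Matrix.mul_nonsing_inv A hdet
  have : ∀ k, 0 ≤ A.mulVec (fun l => A⁻¹ l j) k := by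
    intro k
    have : A.mulVec (fun l => A⁻¹ l j) k = (A * A⁻¹) k j := by
      simp [Matrix.mulVec, dotProduct, Matrix.mul_apply]
    rw [this, hmul]
    by_cases hkj : k = j <;> simp [Matrix.one_apply, hkj]
  exact wcdd_mulVec_nonneg A hW hL _ this i

end AuxWCDD

section AuxRestrict
variable {K : Type*} [Fintype K] [DecidableEq K]

theorem sum_abs_restrict_le (D : Finset K) (g : K → ℝ) (i : {x // x ∈ D}) :
    ∑ j ∈ (univ : Finset {x // x ∈ D}).erase i, |g j.val|
      ≤ ∑ j ∈ (univ : Finset K).erase i.val, |g j| := by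
  calc ∑ j ∈ (univ : Finset {x // x ∈ D}).erase i, |g j.val|
      = ∑ j ∈ ((univ : Finset {x // x ∈ D}).erase i).image Subtype.val, |g j| :=
        by rw [Finset.sum_image (fun a _ b _ h => Subtype.ext h)]
    _ ≤ ∑ j ∈ (univ : Finset K).erase i.val, |g j| := by
        apply Finset.sum_le_sum_of_subset_of_nonneg
        · intro j hj
          obtain ⟨a, ha, rfl⟩ := Finset.mem_image.1 hj
          exact Finset.mem_erase.2 ⟨fun h => (Finset.mem_erase.1 ha).1 (Subtype.ext h), mem_univ _⟩
        · intro j _ _; exact abs_nonneg _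

theorem sum_abs_restrict_add_le (D : Finset K) (g : K → ℝ) (i : {x // x ∈ D})
    (b : K) (hb : b ∉ D) :
    (∑ j ∈ (univ : Finset {x // x ∈ D}).erase i, |g j.val|) + |g b|
      ≤ ∑ j ∈ (univ : Finset K).erase i.val, |g j| := by
  have hbim : b ∉ ((univ : Finset {x // x ∈ D}).erase i).image Subtype.val := by
    intro hmem
    obtain ⟨a, _, rfl⟩ := Finset.mem_image.1 hmem
    exact hb a.prop
  calc (∑ j ∈ (univ : Finset {x // x ∈ D}).erase i, |g j.val|) + |g b|
      = ∑ j ∈ insert b (((univ : Finset {x // x ∈ D}).erase i).image Subtype.val), |g j| := by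
        rw [Finset.sum_insert hbim, Finset.sum_image (fun a _ c _ h => Subtype.ext h)]
        ring
    _ ≤ ∑ j ∈ (univ : Finset K).erase i.val, |g j| := by
        apply Finset.sum_le_sum_of_subset_of_nonneg
        · intro j hj
          rcases Finset.mem_insert.1 hj with rfl | hj
          · exact Finset.mem_erase.2 ⟨fun h => hb (h ▸ i.prop), mem_univ _⟩
          · obtain ⟨a, ha, rfl⟩ := Finset.mem_image.1 hj
            exact Finset.mem_erase.2 ⟨fun h => (Finset.mem_erase.1 ha).1 (Subtype.ext h), mem_univ _⟩
        · intro j _ _; exact abs_nonneg _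

end AuxRestrict

/-- Under (A0) and (A1), for any restricted strategy `φ̃ = (I, δ̃)`
the policy matrix `A(φ̃)` is a WCDD L0-matrix, hence nonsingular with entrywise
nonnegative inverse. -/
theorem statement1 (hN : 1 ≤ N) (s : GameSetup N) (hA0 : s.A0) (hA1 : s.A1)
    (D : Finset (Fin (2*N+1))) (hD : ∀ i, s.x i ≤ 0 → i ∈ D) (w : Fin (2*N+1) → ℝ)
    (I : Finset {i // i ∈ D}) (hI : ∀ i ∈ I, s.x i.val < 0)
    (δt : {i // i ∈ D} → ℝ) (hδt : ∀ i, δt i ∈ s.Z i.val) :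
    IsWCDD (Apolicy s D I δt) ∧ IsL0Matrix (Apolicy s D I δt) ∧
      IsUnit (Apolicy s D I δt).det ∧ ∀ i j, 0 ≤ (Apolicy s D I δt)⁻¹ i j := by
  classical
  set A := Apolicy s D I δt with hA_def
  set δfull : Fin (2*N+1) → ℝ :=
    fun j => if h : j ∈ D then δt ⟨j, h⟩ else (s.hZ_ne j).choose with hδfull
  have hadm : s.Adm δfull := by
    intro j
    by_cases h : j ∈ D
    · simp only [hδfull, dif_pos h]; exact hδt ⟨j, h⟩
    · simp only [hδfull, dif_neg h]; exact (s.hZ_ne j).choose_spec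
  have hval : ∀ i : {i // i ∈ D}, δfull i.val = δt i := by
    intro i; simp only [hδfull, dif_pos i.prop]
  have hrow : ∀ i : {i // i ∈ D}, s.B (fun _ => δt i) i.val = s.B δfull i.val :=
    fun i => s.hB_rd _ _ _ (hval i).symm
  have hB1 : IsWDD (1 - s.B δfull) := (hA1.2 δfull hadm).1
  have hB2 : IsL0Matrix (1 - s.B δfull) := (hA1.2 δfull hadm).2
  have hL1 : IsSDD (-s.L) := hA1.1.1
  have hL2 : IsL0Matrix (-s.L) := hA1.1.2
  have hA : ∀ i j : {i // i ∈ D}, A i j =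
      (if i ∈ I then (1:ℝ) else 0) * ((1 - Btil s D δt) i j)
        - (1 - (if i ∈ I then (1:ℝ) else 0)) * Ltil s D i j := by
    intro i j
    simp only [hA_def, Apolicy, PsiD, Matrix.sub_mul, Matrix.one_mul, Matrix.add_apply,
      Matrix.neg_apply, Matrix.sub_apply, Matrix.diagonal_mul]
    ring
  have hAin : ∀ (i j : {i // i ∈ D}), i ∈ I →
      A i j = (if i = j then (1:ℝ) else 0) - s.B δfull i.val j.val := by
    intro i j hiI
    have hBt : Btil s D δt i j = s.B δfull i.val j.val := congrFun (hrow i) j.val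
    rw [hA i j, if_pos hiI, Matrix.sub_apply, hBt, Matrix.one_apply]
    ring
  have hAout : ∀ (i j : {i // i ∈ D}), i ∉ I → A i j = -(s.L i.val j.val) := by
    intro i j hiI
    rw [hA i j, if_neg hiI]
    simp only [Ltil, Matrix.submatrix_apply]
    ring
  -- L0-matrix property
  have hL0 : IsL0Matrix A := by
    constructor
    · intro i j hij
      have hne : i.val ≠ j.val := fun h => hij (Subtype.ext h)
      by_cases hiI : i ∈ I
      · rw [hAin i j hiI, if_neg hij]
        have h2 := hB2.1 i.val j.val hne
        rw [Matrix.sub_apply, Matrix.one_apply_ne hne] at h2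
        linarith
      · rw [hAout i j hiI]
        have := hL2.1 i.val j.val hne
        rw [Matrix.neg_apply] at this
        linarith
    · intro i
      by_cases hiI : i ∈ I
      · rw [hAin i i hiI, if_pos rfl]
        have := hB2.2 i.val
        rw [Matrix.sub_apply, Matrix.one_apply_eq] at this
        linarith
      · rw [hAout i i hiI]
        have := hL2.2 i.val
        rw [Matrix.neg_apply] at this
        linarith
  -- rows outside I are SDD
  have hSDDout : ∀ i, i ∉ I → SDDRow A i := by
    intro i hiI
    have hfull := hL1 i.val
    rw [SDDRow] at hfull ⊢
    calc ∑ j ∈ univ.erase i, |A i j|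
        = ∑ j ∈ univ.erase i, |(-s.L) i.val j.val| :=
          Finset.sum_congr rfl fun j _ => by rw [hAout i j hiI, Matrix.neg_apply]
      _ ≤ ∑ j ∈ univ.erase i.val, |(-s.L) i.val j| :=
          sum_abs_restrict_le D (fun j => (-s.L) i.val j) i
      _ < |(-s.L) i.val i.val| := hfull
      _ = |A i i| := by rw [hAout i i hiI, Matrix.neg_apply]
  -- absolute values of rows inside I
  have hrowabs : ∀ i, i ∈ I → ∀ j ∈ univ.erase i,
      |A i j| = |(1 - s.B δfull) i.val j.val| := by
    intro i hiI j hj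
    have hij : i ≠ j := (Finset.mem_erase.1 hj).1.symm
    have hne : i.val ≠ j.val := fun h => hij (Subtype.ext h)
    rw [hAin i j hiI, if_neg hij, Matrix.sub_apply, Matrix.one_apply_ne hne]
  have hdiagabs : ∀ i, i ∈ I → |A i i| = |(1 - s.B δfull) i.val i.val| := by
    intro i hiI
    rw [hAin i i hiI, if_pos rfl, Matrix.sub_apply, Matrix.one_apply_eq]
  -- all rows are WDD
  have hWDDA : IsWDD A := by
    intro i
    by_cases hiI : i ∈ I
    · rw [WDDRow]
      have hfull := hB1 i.val
      rw [WDDRow] at hfull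
      calc ∑ j ∈ univ.erase i, |A i j|
          = ∑ j ∈ univ.erase i, |(1 - s.B δfull) i.val j.val| :=
            Finset.sum_congr rfl (hrowabs i hiI)
        _ ≤ ∑ j ∈ univ.erase i.val, |(1 - s.B δfull) i.val j| :=
            sum_abs_restrict_le D _ i
        _ ≤ |(1 - s.B δfull) i.val i.val| := hfull
        _ = |A i i| := (hdiagabs i hiI).symm
    · exact le_of_lt (hSDDout i hiI)
  -- rows in I with an edge leaving D are SDD
  have hSDDleak : ∀ i, i ∈ I → ∀ b, b ∉ D → s.B δfull i.val b ≠ 0 → SDDRow A i := by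
    intro i hiI b hbD hbne
    rw [SDDRow]
    have hfull := hB1 i.val
    rw [WDDRow] at hfull
    have hbval : b ≠ i.val := fun h => hbD (h ▸ i.prop)
    have hbabs : |(1 - s.B δfull) i.val b| = |s.B δfull i.val b| := by
      rw [Matrix.sub_apply, Matrix.one_apply_ne (Ne.symm hbval), zero_sub, abs_neg]
    have hpos : 0 < |s.B δfull i.val b| := abs_pos.2 hbne
    have key := sum_abs_restrict_add_le D (fun j => (1 - s.B δfull) i.val j) i b hbD
    have heqs : ∑ j ∈ univ.erase i, |A i j|
        = ∑ j ∈ univ.erase i, |(1 - s.B δfull) i.val j.val| :=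
      Finset.sum_congr rfl (hrowabs i hiI)
    rw [heqs, hdiagabs i hiI]
    simp only at key
    linarith
  -- the edge lemma inside I
  have hedge : ∀ (a b : {i // i ∈ D}), a ∈ I → a ≠ b →
      s.B δfull a.val b.val ≠ 0 → A a b ≠ 0 := by
    intro a b haI hab hB
    rw [hAin a b haI, if_neg hab]
    simp only [zero_sub, ne_eq, neg_eq_zero]
    exact hB
  -- the strategy and (A0) walk propagation
  have hIx : ∀ v ∈ I.image Subtype.val, s.x v < 0 := by
    intro v hv
    obtain ⟨a, ha, rfl⟩ := Finset.mem_image.1 hv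
    exact hI a ha
  have main : ∀ (u v : Fin (2*N+1)), Relation.TransGen (fun a b => s.B δfull a b ≠ 0) u v →
      v ∉ I.image Subtype.val →
      ∀ (hu : u ∈ D), (⟨u, hu⟩ : {i // i ∈ D}) ∈ I →
      ∃ j, SDDRow A j ∧ ((⟨u, hu⟩ : {i // i ∈ D}) = j ∨ MWalk A ⟨u, hu⟩ j) := by
    intro u v htg hv
    induction htg using Relation.TransGen.head_induction_on with
    | single h =>
      rename_i a
      intro hu huI
      by_cases hvD : v ∈ D
      · have hvI : (⟨v, hvD⟩ : {i // i ∈ D}) ∉ I :=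
          fun hmem => hv (Finset.mem_image.2 ⟨⟨v, hvD⟩, hmem, rfl⟩)
        have hne : (⟨a, hu⟩ : {i // i ∈ D}) ≠ ⟨v, hvD⟩ := by
          intro h'
          apply hv
          have : a = v := congrArg Subtype.val h'
          exact this ▸ Finset.mem_image.2 ⟨⟨a, hu⟩, huI, rfl⟩
        exact ⟨⟨v, hvD⟩, hSDDout _ hvI, Or.inr (Relation.TransGen.single (hedge _ _ huI hne h))⟩
      · exact ⟨⟨a, hu⟩, hSDDleak _ huI v hvD h, Or.inl rfl⟩
    | head h' htg' IH =>
      rename_i a c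
      intro hu huI
      by_cases hcD : c ∈ D
      · by_cases hcI : (⟨c, hcD⟩ : {i // i ∈ D}) ∈ I
        · obtain ⟨j, hjS, hcase⟩ := IH hcD hcI
          by_cases hac : a = c
          · subst hac
            exact ⟨j, hjS, hcase⟩
          · have hne : (⟨a, hu⟩ : {i // i ∈ D}) ≠ ⟨c, hcD⟩ :=
              fun h => hac (congrArg Subtype.val h)
            refine ⟨j, hjS, Or.inr ?_⟩
            rcases hcase with rfl | hw
            · exact Relation.TransGen.single (hedge _ _ huI hne h')
            · exact Relation.TransGen.head (hedge _ _ huI hne h') hw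
        · have hne : (⟨a, hu⟩ : {i // i ∈ D}) ≠ ⟨c, hcD⟩ := fun h => hcI (h ▸ huI)
          exact ⟨⟨c, hcD⟩, hSDDout _ hcI,
            Or.inr (Relation.TransGen.single (hedge _ _ huI hne h'))⟩
      · exact ⟨⟨a, hu⟩, hSDDleak _ huI c hcD h', Or.inl rfl⟩
  have hchain : ∀ i, ¬ SDDRow A i → ∃ j, SDDRow A j ∧ MWalk A i j := by
    intro i hns
    have hiI : i ∈ I := by
      by_contra h
      exact hns (hSDDout i h)
    obtain ⟨jv, hjv, hwalk⟩ :=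
      hA0 ⟨I.image Subtype.val, δfull, hIx, hadm⟩ i.val (Finset.mem_image.2 ⟨i, hiI, rfl⟩)
    obtain ⟨j, hjS, hcase⟩ := main i.val jv hwalk hjv i.prop (by simpa using hiI)
    rcases hcase with heq | hw
    · exfalso
      apply hns
      have : i = j := by rw [← heq]
      rw [this]
      exact hjS
    · exact ⟨j, hjS, hw⟩
  have hWCDD : IsWCDD A := ⟨hWDDA, hchain⟩
  exact ⟨hWCDD, hL0, wcdd_det_isUnit A hWCDD hL0,
    wcdd_inv_nonneg A hWCDD hL0⟩

end
end

section
/- Assume (A0), (A1) and (A2). Then for all strategies φ, φ̄ ∈ Φ: (i) 𝔸(φ,φ̄) is a WCDD L0-matrix, and hence a nonsingular M-matrix with entrywise nonnegative inverse; (ii) 𝔹(φ) is substochastic. -/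
open Matrix Finset Filter Topology

noncomputable section

variable {N : ℕ}

/-- The spectral radius of a real matrix (computed over `ℂ`). -/
def specRad {n : Type*} [Fintype n] [DecidableEq n] (A : Matrix n n ℝ) : ℝ :=
  sSup ((fun z => ‖z‖) '' spectrum ℂ (A.map fun r => (r : ℂ)))

/-- A nonsingular M-matrix: `A = t • Id − B` with `B ≥ 0` entrywise and `ρ(B) < t`. -/
def IsNonsingMMatrix {n : Type*} [Fintype n] [DecidableEq n] (A : Matrix n n ℝ) : Prop :=
  ∃ (t : ℝ) (Bm : Matrix n n ℝ), (∀ i j, 0 ≤ Bm i j) ∧ specRad Bm < t ∧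
    A = t • (1 : Matrix n n ℝ) - Bm

section AuxGeneral

variable {n : Type*} [Fintype n] [DecidableEq n]

lemma transGen_of_transGen_ne {r : n → n → Prop} {i j : n}
    (h : Relation.TransGen r i j) :
    i = j ∨ Relation.TransGen (fun a b => a ≠ b ∧ r a b) i j := by
  induction h with
  | single hr =>
    rename_i b
    rcases eq_or_ne i b with he | hne
    · exact Or.inl he
    · exact Or.inr (Relation.TransGen.single ⟨hne, hr⟩)
  | tail hw hr ih =>
    rename_i b c
    rcases eq_or_ne b c with rfl | hbc
    · exact ih
    · rcases ih with rfl | hw'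
      · exact Or.inr (Relation.TransGen.single ⟨hbc, hr⟩)
      · exact Or.inr (hw'.tail ⟨hbc, hr⟩)

lemma ker_eq_zero_of_chained [Nonempty n] {M : Matrix n n ℂ}
    (hw : ∀ i, ∑ j ∈ Finset.univ.erase i, norm (M i j) ≤ norm (M i i))
    (hc : ∀ i, norm (M i i) ≤ ∑ j ∈ Finset.univ.erase i, norm (M i j) →
      ∃ j, (∑ k ∈ Finset.univ.erase j, norm (M j k) < norm (M j j)) ∧
        Relation.TransGen (fun a b => a ≠ b ∧ M a b ≠ 0) i j)
    {v : n → ℂ} (hv : M.mulVec v = 0) : v = 0 := by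
  by_contra hv0
  set m := Finset.univ.sup' Finset.univ_nonempty (fun i => norm (v i)) with hm
  have hle : ∀ j, norm (v j) ≤ m := fun j =>
    Finset.le_sup' (fun i => norm (v i)) (Finset.mem_univ j)
  have hmpos : 0 < m := by
    obtain ⟨i, hi⟩ := Function.ne_iff.mp hv0
    have : 0 < norm (v i) := by simpa using hi
    exact lt_of_lt_of_le this (hle i)
  have key : ∀ i, norm (v i) = m →
      (norm (M i i) ≤ ∑ j ∈ Finset.univ.erase i, norm (M i j)) ∧
      ∀ j, M i j ≠ 0 → norm (v j) = m := by
    intro i hi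
    have h0 : ∑ j, M i j * v j = 0 := by
      have := congrFun hv i
      simpa [Matrix.mulVec, dotProduct] using this
    have hsplit : M i i * v i = -∑ j ∈ Finset.univ.erase i, M i j * v j := by
      have := Finset.add_sum_erase Finset.univ (fun j => M i j * v j) (Finset.mem_univ i)
      rw [h0] at this
      linear_combination this
    have h1 : norm (M i i) * m ≤
        ∑ j ∈ Finset.univ.erase i, norm (M i j) * norm (v j) := by
      calc norm (M i i) * m = norm (M i i * v i) := by
            rw [norm_mul, hi]
        _ = norm (∑ j ∈ Finset.univ.erase i, M i j * v j) := by
            rw [hsplit, norm_neg]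
        _ ≤ ∑ j ∈ Finset.univ.erase i, norm (M i j * v j) :=
            norm_sum_le _ _
        _ = ∑ j ∈ Finset.univ.erase i, norm (M i j) * norm (v j) := by
            simp [norm_mul]
    have h2 : ∀ j ∈ Finset.univ.erase i,
        norm (M i j) * norm (v j) ≤ norm (M i j) * m := fun j _ =>
      mul_le_mul_of_nonneg_left (hle j) (norm_nonneg _)
    have h3 : ∑ j ∈ Finset.univ.erase i, norm (M i j) * m ≤ norm (M i i) * m := by
      rw [← Finset.sum_mul]
      exact mul_le_mul_of_nonneg_right (hw i) hmpos.le
    have h2' : ∑ j ∈ Finset.univ.erase i, norm (M i j) * norm (v j) ≤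
        ∑ j ∈ Finset.univ.erase i, norm (M i j) * m := Finset.sum_le_sum h2
    have heq2 : ∑ j ∈ Finset.univ.erase i, norm (M i j) * norm (v j) =
        ∑ j ∈ Finset.univ.erase i, norm (M i j) * m := le_antisymm h2' (by linarith)
    have heq3 : ∑ j ∈ Finset.univ.erase i, norm (M i j) * m =
        norm (M i i) * m := le_antisymm h3 (by linarith)
    constructor
    · have : ∑ j ∈ Finset.univ.erase i, norm (M i j) = norm (M i i) := by
        have := heq3
        rw [← Finset.sum_mul] at this
        exact mul_right_cancel₀ (ne_of_gt hmpos) this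
      exact this.ge
    · intro j hj
      rcases eq_or_ne j i with rfl | hji
      · exact hi
      · have hterm := (Finset.sum_eq_sum_iff_of_le h2).mp heq2 j
          (Finset.mem_erase.mpr ⟨hji, Finset.mem_univ j⟩)
        have habsj : 0 < norm (M i j) := by
          simpa using hj
        exact mul_left_cancel₀ (ne_of_gt habsj) hterm
  have prop : ∀ a b : n, Relation.TransGen (fun a b => a ≠ b ∧ M a b ≠ 0) a b →
      norm (v a) = m → norm (v b) = m := by
    intro a b h
    induction h with
    | single h => exact fun ha => (key a ha).2 _ h.2
    | tail _ h ih => exact fun ha => (key _ (ih ha)).2 _ h.2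
  obtain ⟨i0, -, hi0⟩ := Finset.exists_mem_eq_sup' Finset.univ_nonempty
      (fun i => norm (v i))
  obtain ⟨j, hj, hwalk⟩ := hc i0 (key i0 hi0.symm).1
  exact absurd hj (not_lt.mpr (key j (prop _ _ hwalk hi0.symm)).1)

lemma det_shift_ne_zero [Nonempty n] {A : Matrix n n ℝ} (hW : IsWCDD A)
    (lam : ℂ) (hlam : ∀ i, |A i i| ≤ norm ((A i i : ℂ) - lam)) :
    ((A.map fun r => (r : ℂ)) - lam • 1).det ≠ 0 := by
  set M := (A.map fun r => (r : ℂ)) - lam • 1 with hM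
  have hoff : ∀ i j, i ≠ j → M i j = (A i j : ℂ) := by
    intro i j hij
    simp [hM, Matrix.sub_apply, Matrix.smul_apply, Matrix.one_apply_ne hij, Matrix.map_apply]
  have hdiag : ∀ i, M i i = (A i i : ℂ) - lam := by
    intro i
    simp [hM, Matrix.sub_apply, Matrix.smul_apply, Matrix.one_apply, Matrix.map_apply]
  have hsum : ∀ i, ∑ j ∈ Finset.univ.erase i, norm (M i j)
      = ∑ j ∈ Finset.univ.erase i, |A i j| := by
    intro i
    refine Finset.sum_congr rfl fun j hj => ?_
    rw [hoff i j (Finset.ne_of_mem_erase hj).symm, Complex.norm_real, Real.norm_eq_abs]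
  have habs : ∀ i, |A i i| ≤ norm (M i i) := fun i => (hdiag i) ▸ hlam i
  intro hdet
  obtain ⟨v, hv0, hv⟩ := (Matrix.exists_mulVec_eq_zero_iff).mpr hdet
  refine hv0 (ker_eq_zero_of_chained ?_ ?_ hv)
  · intro i
    rw [hsum i]
    exact le_trans (hW.1 i) (habs i)
  · intro i hi
    have hnot : ¬ SDDRow A i := by
      intro hs
      rw [hsum i] at hi
      have : ∑ j ∈ Finset.univ.erase i, |A i j| < |A i i| := hs
      linarith [habs i]
    obtain ⟨j, hj, hwalk⟩ := hW.2 i hnot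
    rcases transGen_of_transGen_ne hwalk with rfl | hwalk'
    · exact absurd hj hnot
    refine ⟨j, ?_, ?_⟩
    · rw [hsum j]
      exact lt_of_lt_of_le hj (habs j)
    · refine Relation.TransGen.mono (r := fun a b => a ≠ b ∧ A a b ≠ 0) (p := fun a b => a ≠ b ∧ M a b ≠ 0) (fun a b hab => ⟨hab.1, ?_⟩) i j hwalk'
      rw [hoff a b hab.1]
      exact_mod_cast hab.2

lemma wcdd_l0_det_ne_zero [Nonempty n] {A : Matrix n n ℝ} (hW : IsWCDD A) :
    A.det ≠ 0 := by
  intro h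
  have h0 := det_shift_ne_zero hW 0 (fun i => by simp)
  apply h0
  have hmap : (A.map fun r => (r : ℂ)) - (0:ℂ) • 1 = A.map Complex.ofRealHom := by
    simp [Complex.ofRealHom]
  rw [hmap, show A.map ⇑Complex.ofRealHom = Complex.ofRealHom.mapMatrix A from rfl,
    ← RingHom.map_det, h]
  simp

lemma wcdd_l0_solution_nonneg [Nonempty n] {A : Matrix n n ℝ} (hW : IsWCDD A)
    (hL : IsL0Matrix A) {u e : n → ℝ} (hue : A.mulVec u = e) (he : ∀ i, 0 ≤ e i) :
    ∀ i, 0 ≤ u i := by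
  by_contra hcon
  push_neg at hcon
  obtain ⟨i1, hi1⟩ := hcon
  set m := Finset.univ.inf' Finset.univ_nonempty u with hm
  have hge : ∀ j, m ≤ u j := fun j => Finset.inf'_le _ (Finset.mem_univ j)
  have hmneg : m < 0 := lt_of_le_of_lt (hge i1) hi1
  have hrs : ∀ i, ∑ j, A i j = |A i i| - ∑ j ∈ Finset.univ.erase i, |A i j| := by
    intro i
    rw [← Finset.add_sum_erase _ _ (Finset.mem_univ i), abs_of_nonneg (hL.2 i)]
    have : ∑ j ∈ Finset.univ.erase i, A i j = -∑ j ∈ Finset.univ.erase i, |A i j| := by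
      rw [← Finset.sum_neg_distrib]
      refine Finset.sum_congr rfl fun j hj => ?_
      rw [abs_of_nonpos (hL.1 i j (Finset.ne_of_mem_erase hj).symm)]
      ring
    rw [this]
    ring
  have key : ∀ i, u i = m → (¬ SDDRow A i) ∧ ∀ j, A i j ≠ 0 → u j = m := by
    intro i hi
    have h0 : 0 ≤ ∑ j, A i j * u j := by
      have := congrFun hue i
      rw [Matrix.mulVec, dotProduct] at this
      rw [this]
      exact he i
    have hterm : ∀ j ∈ Finset.univ.erase i, A i j * u j ≤ A i j * m := fun j hj =>
      mul_le_mul_of_nonpos_left (hge j) (hL.1 i j (Finset.ne_of_mem_erase hj).symm)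
    have hr0 : 0 ≤ ∑ j, A i j := by
      rw [hrs]
      have := hW.1 i
      unfold WDDRow at this
      linarith
    have hsum1 : ∑ j, A i j * u j ≤ (∑ j, A i j) * m := by
      rw [Finset.sum_mul, ← Finset.add_sum_erase _ _ (Finset.mem_univ i),
        ← Finset.add_sum_erase _ (fun j => A i j * m) (Finset.mem_univ i), hi]
      exact add_le_add (le_refl _) (Finset.sum_le_sum hterm)
    have hrsm : (∑ j, A i j) * m ≤ 0 := mul_nonpos_of_nonneg_of_nonpos hr0 hmneg.le
    have heqz : (∑ j, A i j) * m = 0 := le_antisymm hrsm (by linarith)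
    have hreq : ∑ j, A i j = 0 := by
      rcases mul_eq_zero.mp heqz with h | h
      · exact h
      · exact absurd h (ne_of_lt hmneg)
    constructor
    · intro hs
      unfold SDDRow at hs
      rw [hrs] at hreq
      linarith
    · intro j hAij
      rcases eq_or_ne j i with rfl | hji
      · exact hi
      · have heqsum : ∑ j ∈ Finset.univ.erase i, A i j * u j
            = ∑ j ∈ Finset.univ.erase i, A i j * m := by
          have hl : (∑ j, A i j) * m ≤ ∑ j, A i j * u j := by
            rw [heqz]; exact h0
          rw [Finset.sum_mul, ← Finset.add_sum_erase _ _ (Finset.mem_univ i),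
            ← Finset.add_sum_erase _ (fun j => A i j * u j) (Finset.mem_univ i), hi] at hl
          have := Finset.sum_le_sum hterm
          have h2 : ∑ j ∈ Finset.univ.erase i, A i j * m ≤
              ∑ j ∈ Finset.univ.erase i, A i j * u j := by linarith
          exact le_antisymm this h2
        have := (Finset.sum_eq_sum_iff_of_le hterm).mp heqsum j
          (Finset.mem_erase.mpr ⟨hji, Finset.mem_univ j⟩)
        exact (mul_left_cancel₀ hAij this.symm).symm
  have prop : ∀ a b : n, MWalk A a b → u a = m → u b = m := by
    intro a b h
    induction h with
    | single h => exact fun ha => (key a ha).2 _ h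
    | tail _ h ih => exact fun ha => (key _ (ih ha)).2 _ h
  obtain ⟨i0, -, hi0⟩ := Finset.exists_mem_eq_inf' Finset.univ_nonempty u
  obtain ⟨j, hj, hwalk⟩ := hW.2 i0 (key i0 hi0.symm).1
  exact absurd hj (key j (prop _ _ hwalk hi0.symm)).1

lemma wcdd_l0_master [Nonempty n] {A : Matrix n n ℝ} (hW : IsWCDD A) (hL : IsL0Matrix A) :
    IsNonsingMMatrix A ∧ (∀ i j, 0 ≤ A⁻¹ i j) := by
  have hdet : A.det ≠ 0 := wcdd_l0_det_ne_zero hW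
  constructor
  · -- M-matrix
    set t := (Finset.univ.sup' Finset.univ_nonempty fun i => A i i) + 1 with ht
    have htA : ∀ i, A i i ≤ t - 1 := fun i => by
      have := Finset.le_sup' (fun i => A i i) (Finset.mem_univ i)
      simp only [ht]; linarith
    have ht0 : 0 < t := by
      obtain ⟨i⟩ := ‹Nonempty n›
      have := hL.2 i
      linarith [htA i]
    refine ⟨t, t • 1 - A, ?_, ?_, (sub_sub_cancel _ _).symm⟩
    · intro i j
      rcases eq_or_ne i j with rfl | hij
      · simp only [Matrix.sub_apply, Matrix.smul_apply, Matrix.one_apply_eq, smul_eq_mul,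
          mul_one]
        linarith [htA i]
      · simp only [Matrix.sub_apply, Matrix.smul_apply, Matrix.one_apply_ne hij, smul_eq_mul,
          mul_zero]
        have := hL.1 i j hij
        linarith
    · -- spectral radius bound
      have hbound : ∀ z ∈ (fun z => norm z) ''
          spectrum ℂ (((t • (1 : Matrix n n ℝ) - A)).map fun r => (r : ℂ)), z < t := by
        rintro z ⟨μ, hμ, rfl⟩
        by_contra hge
        push_neg at hge
        set lam : ℂ := (t : ℂ) - μ with hlam_def
        have hlam : ∀ i, |A i i| ≤ norm ((A i i : ℂ) - lam) := by
          intro i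
          have h1 : ((A i i : ℂ)) - lam = μ - ((t - A i i : ℝ) : ℂ) := by
            push_cast [hlam_def]; ring
          rw [h1]
          have h2 : norm μ - norm ((t - A i i : ℝ) : ℂ) ≤
              norm (μ - ((t - A i i : ℝ) : ℂ)) := by
            exact norm_sub_norm_le μ ((t - A i i : ℝ) : ℂ)
          have h3 : norm ((t - A i i : ℝ) : ℂ) = t - A i i := by
            rw [Complex.norm_real, Real.norm_eq_abs, abs_of_nonneg]
            linarith [htA i]
          rw [abs_of_nonneg (hL.2 i)]
          linarith [htA i]
        have hdet2 := det_shift_ne_zero hW lam hlam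
        have hMeq : algebraMap ℂ (Matrix n n ℂ) μ -
            ((t • (1 : Matrix n n ℝ) - A).map fun r => (r : ℂ)) =
            (A.map fun r => (r : ℂ)) - lam • 1 := by
          ext i j
          simp only [Matrix.sub_apply, Matrix.map_apply, Matrix.smul_apply,
            Algebra.algebraMap_eq_smul_one, Matrix.one_apply, smul_eq_mul]
          rcases eq_or_ne i j with rfl | hij
          · simp [hlam_def]; push_cast; ring
          · simp [hij]
        have : IsUnit (algebraMap ℂ (Matrix n n ℂ) μ -
            ((t • (1 : Matrix n n ℝ) - A).map fun r => (r : ℂ))) := by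
          rw [hMeq, Matrix.isUnit_iff_isUnit_det]
          exact isUnit_iff_ne_zero.mpr hdet2
        exact (spectrum.mem_iff.mp hμ) this
      rw [show specRad (t • (1 : Matrix n n ℝ) - A) = sSup ((fun z => norm z) ''
          spectrum ℂ (((t • (1 : Matrix n n ℝ) - A)).map fun r => (r : ℂ))) from rfl]
      set Sp := (fun z => norm z) ''
          spectrum ℂ (((t • (1 : Matrix n n ℝ) - A)).map fun r => (r : ℂ)) with hSp
      have hSpfin : Sp.Finite := (Matrix.finite_spectrum _).image _
      rcases Set.eq_empty_or_nonempty Sp with hemp | hne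
      · rw [hemp, Real.sSup_empty]; exact ht0
      · exact hbound _ (hne.csSup_mem hSpfin)
  · -- inverse nonneg
    have hinv : A * A⁻¹ = 1 := Matrix.mul_nonsing_inv A (isUnit_iff_ne_zero.mpr hdet)
    intro i j
    have hcol : A.mulVec (fun k => A⁻¹ k j) = fun i => (1 : Matrix n n ℝ) i j := by
      funext i
      rw [← hinv]
      simp [Matrix.mulVec, dotProduct, Matrix.mul_apply]
    refine wcdd_l0_solution_nonneg hW hL hcol (fun k => ?_) i
    rcases eq_or_ne k j with rfl | h
    · simp
    · simp [Matrix.one_apply_ne h]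

lemma sddRow_one (i : n) : SDDRow (1 : Matrix n n ℝ) i := by
  unfold SDDRow
  rw [Finset.sum_eq_zero, Matrix.one_apply_eq]
  · norm_num
  · intro j hj
    rw [Matrix.one_apply_ne (Finset.ne_of_mem_erase hj).symm, abs_zero]

lemma SDDRow_congr {A B : Matrix n n ℝ} {i : n} (h : A i = B i) :
    SDDRow A i ↔ SDDRow B i := by
  unfold SDDRow; rw [h]

lemma WDDRow_congr {A B : Matrix n n ℝ} {i : n} (h : A i = B i) :
    WDDRow A i ↔ WDDRow B i := by
  unfold WDDRow; rw [h]

lemma walk_transfer {A B : Matrix n n ℝ} {I : Finset n}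
    (hAB : ∀ a b, a ∈ I → a ≠ b → B a b ≠ 0 → A a b ≠ 0)
    {i j : n} (hw : MWalk B i j) (hj : j ∉ I) (hi : i ∈ I) :
    ∃ k, k ∉ I ∧ MWalk A i k := by
  refine Relation.TransGen.head_induction_on (motive := fun a _ => a ∈ I → ∃ k, k ∉ I ∧ MWalk A a k)
    hw ?_ ?_ hi
  · intro a h ha
    exact ⟨j, hj, Relation.TransGen.single (hAB a j ha (fun he => hj (he ▸ ha)) h)⟩
  · intro a c h' _ ihc ha
    by_cases hc : c ∈ I
    · obtain ⟨k, hk, wk⟩ := ihc hc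
      rcases eq_or_ne a c with rfl | hac
      · exact ⟨k, hk, wk⟩
      · exact ⟨k, hk, wk.head (hAB a c ha hac h')⟩
    · exact ⟨c, hc, Relation.TransGen.single
        (hAB a c ha (fun he => hc (he ▸ ha)) h')⟩

end AuxGeneral

section AuxGame

variable {N : ℕ}

lemma Smat_conj_apply (M : Matrix (Fin (2*N+1)) (Fin (2*N+1)) ℝ) (i j : Fin (2*N+1)) :
    (Smat N * M * Smat N) i j = M i.rev j.rev := by
  have h1 : ∀ l, (Smat N * M) i l = M i.rev l := by
    intro l
    simp [Smat, Matrix.mul_apply]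
  rw [Matrix.mul_apply]
  simp only [h1]
  have h2 : ∀ l : Fin (2*N+1), Smat N l j = if l = j.rev then (1:ℝ) else 0 := by
    intro l
    show (if j = l.rev then (1:ℝ) else 0) = _
    by_cases h : l = j.rev
    · simp [h, Fin.rev_rev]
    · have : j ≠ l.rev := fun hh => h (by rw [hh, Fin.rev_rev])
      simp [h, this]
  simp only [h2]
  simp

lemma Smat_conj_diagonal (d : Fin (2*N+1) → ℝ) :
    Smat N * Matrix.diagonal d * Smat N = Matrix.diagonal fun i => d i.rev := by
  ext a b
  rw [Smat_conj_apply]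
  rcases eq_or_ne a b with rfl | h
  · simp
  · rw [Matrix.diagonal_apply_ne _ (fun hh => h (Fin.rev_injective hh)),
      Matrix.diagonal_apply_ne _ h]

variable (s : GameSetup N)

lemma Amat_row (φ φ' : s.Strategy) (i : Fin (2*N+1)) :
    s.Amat φ φ' i = if i ∈ φ'.I then (1 - s.B φ'.δ) i
      else if i.rev ∈ φ.I then (1 : Matrix (Fin (2*N+1)) (Fin (2*N+1)) ℝ) i
      else (-s.L) i := by
  have hdisj : i ∈ φ'.I → i.rev ∉ φ.I := by
    intro h1 h2
    have ha := φ'.hI i h1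
    have h3 := φ.hI i.rev h2
    rw [s.hx_sym i] at h3
    linarith
  have hD : (1 - s.Psi φ' - Smat N * s.Psi φ * Smat N) =
      Matrix.diagonal (fun k => 1 - (if k ∈ φ'.I then (1:ℝ) else 0)
        - (if k.rev ∈ φ.I then (1:ℝ) else 0)) := by
    rw [GameSetup.Psi, GameSetup.Psi, Smat_conj_diagonal, ← Matrix.diagonal_one,
      ← Matrix.diagonal_sub, ← Matrix.diagonal_sub]
  funext j
  show (1 - (1 - s.Psi φ' - Smat N * s.Psi φ * Smat N) * (1 + s.L)
    - s.Psi φ' * s.B φ'.δ) i j = _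
  rw [hD]
  simp only [Matrix.sub_apply, Matrix.diagonal_mul, GameSetup.Psi, Pi.sub_apply]
  by_cases h1 : i ∈ φ'.I
  · have h2 := hdisj h1
    simp [h1, h2, Matrix.sub_apply]
  · by_cases h2 : i.rev ∈ φ.I
    · simp [h1, h2]
    · simp only [h1, h2, if_false, if_true, ite_false, Matrix.add_apply, Matrix.neg_apply]
      ring

end AuxGame

/-- Under (A0)–(A2), for all strategies `φ, φ̄ ∈ Φ`: `𝔸(φ,φ̄)` is a
WCDD L0-matrix, hence a nonsingular M-matrix with entrywise nonnegative inverse, and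
`𝔹(φ)` is substochastic. -/
theorem statement4 (hN : 1 ≤ N) (s : GameSetup N)
    (hA0 : s.A0) (hA1 : s.A1) (hA2 : s.A2) :
    ∀ φ φ' : s.Strategy,
      (IsWCDD (s.Amat φ φ') ∧ IsL0Matrix (s.Amat φ φ')) ∧
      IsNonsingMMatrix (s.Amat φ φ') ∧
      (∀ i j, 0 ≤ (s.Amat φ φ')⁻¹ i j) ∧
      IsSubstochastic (s.Bmat φ) := by
  intro φ φ'
  obtain ⟨⟨hLsdd, hLl0⟩, hBprop⟩ := hA1
  have hB' := hBprop φ'.δ φ'.hδ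
  have hrow := Amat_row s φ φ'
  have hsdd_out : ∀ i, i ∉ φ'.I → SDDRow (s.Amat φ φ') i := by
    intro i hi
    by_cases h2 : i.rev ∈ φ.I
    · exact (SDDRow_congr (by rw [hrow i, if_neg hi, if_pos h2])).mpr (sddRow_one i)
    · exact (SDDRow_congr (by rw [hrow i, if_neg hi, if_neg h2])).mpr (hLsdd i)
  have hWDD : IsWDD (s.Amat φ φ') := by
    intro i
    by_cases h1 : i ∈ φ'.I
    · exact (WDDRow_congr (by rw [hrow i, if_pos h1])).mpr (hB'.1 i)
    · exact le_of_lt (hsdd_out i h1)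
  have hWCDD : IsWCDD (s.Amat φ φ') := by
    refine ⟨hWDD, fun i hnot => ?_⟩
    by_cases h1 : i ∈ φ'.I
    · obtain ⟨j, hj, hwalk⟩ := hA0 φ' i h1
      have hedge : ∀ a b, a ∈ φ'.I → a ≠ b → s.B φ'.δ a b ≠ 0 →
          s.Amat φ φ' a b ≠ 0 := by
        intro a b ha hab hB0
        have hb := congrFun (hrow a) b
        rw [if_pos ha] at hb
        rw [hb, Matrix.sub_apply, Matrix.one_apply_ne hab]
        simpa using hB0
      obtain ⟨k, hk, hwalkA⟩ := walk_transfer hedge hwalk hj h1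
      exact ⟨k, hsdd_out k hk, hwalkA⟩
    · exact absurd (hsdd_out i h1) hnot
  have hL0 : IsL0Matrix (s.Amat φ φ') := by
    constructor
    · intro i j hij
      have hb := congrFun (hrow i) j
      by_cases h1 : i ∈ φ'.I
      · rw [hb, if_pos h1]
        exact hB'.2.1 i j hij
      · by_cases h2 : i.rev ∈ φ.I
        · rw [hb, if_neg h1, if_pos h2, Matrix.one_apply_ne hij]
        · rw [hb, if_neg h1, if_neg h2]
          exact hLl0.1 i j hij
    · intro i
      have hb := congrFun (hrow i) i
      by_cases h1 : i ∈ φ'.I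
      · rw [hb, if_pos h1]
        exact hB'.2.2 i
      · by_cases h2 : i.rev ∈ φ.I
        · rw [hb, if_neg h1, if_pos h2, Matrix.one_apply_eq]
          norm_num
        · rw [hb, if_neg h1, if_neg h2]
          exact hLl0.2 i
  have hmaster := wcdd_l0_master hWCDD hL0
  -- substochasticity of 𝔹(φ)
  have hBφ := hBprop φ.δ φ.hδ
  have hBnn : ∀ i j, 0 ≤ s.B φ.δ i j := by
    intro i j
    rcases eq_or_ne i j with rfl | h
    · exact hA2 φ.δ φ.hδ i
    · have := hBφ.2.1 i j h
      rw [Matrix.sub_apply, Matrix.one_apply_ne h] at this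
      linarith
  have hBrowsum : ∀ i, ∑ j, s.B φ.δ i j ≤ 1 := by
    intro i
    have hwdd := hBφ.1 i
    unfold WDDRow at hwdd
    have hdd := hBφ.2.2 i
    rw [Matrix.sub_apply, Matrix.one_apply_eq] at hdd
    have hsum : ∑ j ∈ Finset.univ.erase i, |(1 - s.B φ.δ) i j|
        = ∑ j ∈ Finset.univ.erase i, s.B φ.δ i j := by
      refine Finset.sum_congr rfl fun j hj => ?_
      rw [Matrix.sub_apply, Matrix.one_apply_ne (Finset.ne_of_mem_erase hj).symm]
      rw [abs_of_nonpos (by linarith [hBnn i j])]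
      ring
    rw [hsum, Matrix.sub_apply, Matrix.one_apply_eq, abs_of_nonneg hdd] at hwdd
    rw [← Finset.add_sum_erase _ _ (Finset.mem_univ i)]
    linarith
  have hBmat : ∀ i j, s.Bmat φ i j =
      (if i.rev ∈ φ.I then (1:ℝ) else 0) * s.B φ.δ i.rev j.rev := by
    intro i j
    rw [GameSetup.Bmat, Matrix.mul_assoc (Smat N) (s.Psi φ) (s.B φ.δ), Smat_conj_apply,
      GameSetup.Psi, Matrix.diagonal_mul]
  have hsub : IsSubstochastic (s.Bmat φ) := by
    constructor
    · intro i j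
      rw [hBmat]
      by_cases h : i.rev ∈ φ.I
      · simp [h, hBnn]
      · simp [h]
    · intro i
      have hre : ∑ j : Fin (2*N+1), s.B φ.δ i.rev j.rev = ∑ k, s.B φ.δ i.rev k :=
        Fintype.sum_bijective Fin.rev Fin.rev_bijective _ _ (fun j => rfl)
      calc ∑ j, s.Bmat φ i j
          = (if i.rev ∈ φ.I then (1:ℝ) else 0) * ∑ j : Fin (2*N+1), s.B φ.δ i.rev j.rev := by
            rw [Finset.mul_sum]
            exact Finset.sum_congr rfl fun j _ => hBmat i j
        _ ≤ 1 := by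
            by_cases h : i.rev ∈ φ.I
            · simp only [h, if_true, one_mul]
              rw [hre]
              exact hBrowsum i.rev
            · simp [h]
  exact ⟨⟨hWCDD, hL0⟩, hmaster.1, hmaster.2, hsub⟩

end
end

section
/- Let A be a WCDD L0-matrix (indexed by a finite set). Then A is nonsingular, every diagonal entry of A is strictly positive, every diagonal entry of A^{-1} is strictly positive, and for all indices i ≠ j one has (A^{-1})_{ij} > 0 if and only if there is a walk in graph A from i to j. -/
open Matrix Finset Filter Topology

noncomputable section

variable {N : ℕ}

/-!
Everything rests on a minimum principle for a WCDD L0-matrix `A`: if `(A x)ᵢ ≥ 0` wherever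
`xᵢ < 0`, then `x ≥ 0`. At a row where `x` attains a negative minimum the inequality is tight,
so the row is not SDD and the minimum spreads along the edges of `graph A`, until a walk reaches
an SDD row. Applied to `x` and `-x`, and to the columns of `A⁻¹`, it gives nonsingularity and
`A⁻¹ ≥ 0`. Row `k` of `A A⁻¹ = 1` then makes `A⁻¹ₖⱼ > 0` as soon as `Aₖₗ ≠ 0` and `A⁻¹ₗⱼ > 0`,
while a column of `A⁻¹` with the rows that reach `j` set to zero is killed by the principle.
-/

section WCDD

variable {n : Type*} [Fintype n] [DecidableEq n] {A : Matrix n n ℝ}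

theorem IsL0Matrix.sum_row_eq (hA : IsL0Matrix A) (i : n) :
    ∑ j, A i j = |A i i| - ∑ j ∈ univ.erase i, |A i j| := by
  rw [← add_sum_erase _ _ (mem_univ i), abs_of_nonneg (hA.2 i), sub_eq_add_neg,
    ← sum_neg_distrib]
  congr 1
  refine sum_congr rfl fun j hj => ?_
  rw [abs_of_nonpos (hA.1 i j (ne_of_mem_erase hj).symm), neg_neg]

theorem IsL0Matrix.sddRow_iff (hA : IsL0Matrix A) (i : n) : SDDRow A i ↔ 0 < ∑ j, A i j := by
  rw [hA.sum_row_eq, sub_pos, SDDRow]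

theorem IsL0Matrix.wddRow_iff (hA : IsL0Matrix A) (i : n) : WDDRow A i ↔ 0 ≤ ∑ j, A i j := by
  rw [hA.sum_row_eq, sub_nonneg, WDDRow]

theorem IsWCDD.not_of_closed (hA : IsWCDD A) {P : n → Prop}
    (hP : ∀ i, P i → ¬ SDDRow A i ∧ ∀ j, A i j ≠ 0 → P j) (i : n) : ¬ P i := by
  intro hi
  obtain ⟨t, ht, hit⟩ := hA.2 i (hP i hi).1
  have hPt : P t := by
    clear ht
    induction hit with
    | single hij => exact (hP i hi).2 _ hij
    | tail _ hjk ih => exact (hP _ ih).2 _ hjk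
  exact (hP t hPt).1 ht

theorem IsWCDD.diag_pos (hA : IsWCDD A) (hL0 : IsL0Matrix A) (i : n) : 0 < A i i := by
  refine (hL0.2 i).lt_of_ne fun hii => ?_
  have hrow : ∀ j, A i j = 0 := by
    have hsum := hA.1 i
    rw [WDDRow, ← hii, abs_zero] at hsum
    have hzero := (sum_eq_zero_iff_of_nonneg fun j _ => abs_nonneg (A i j)).mp
      (hsum.antisymm (sum_nonneg fun j _ => abs_nonneg _))
    intro j
    rcases eq_or_ne j i with rfl | hji
    · exact hii.symm
    · exact abs_eq_zero.mp (hzero j (mem_erase.mpr ⟨hji, mem_univ j⟩))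
  refine hA.not_of_closed (P := fun k => ∀ j, A k j = 0) (fun k hk => ⟨?_, ?_⟩) i hrow
  · simp [SDDRow, hk]
  · exact fun j hkj => absurd (hk j) hkj

/-- At a row `k` where `x` attains its negative minimum `m`,
`(A x)ₖ = m ∑ⱼ Aₖⱼ + ∑ⱼ Aₖⱼ (xⱼ - m)` is a sum of two nonpositive terms, so both vanish. -/
theorem IsWCDD.nonneg_of_mulVec_nonneg (hA : IsWCDD A) (hL0 : IsL0Matrix A) {x : n → ℝ}
    (hx : ∀ i, x i < 0 → 0 ≤ (A *ᵥ x) i) : 0 ≤ x := by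
  by_contra hneg
  obtain ⟨i₀, hi₀⟩ : ∃ i, x i < 0 := by simpa [Pi.le_def] using hneg
  have : Nonempty n := ⟨i₀⟩
  obtain ⟨i, hmin⟩ := Finite.exists_min x
  have hm : x i < 0 := (hmin i₀).trans_lt hi₀
  refine hA.not_of_closed (P := fun k => x k = x i) (fun k hk => ?_) i rfl
  have hterm : ∀ j, A k j * (x j - x i) ≤ 0 := fun j => by
    rcases eq_or_ne k j with rfl | hkj
    · simp [hk]
    · exact mul_nonpos_of_nonpos_of_nonneg (hL0.1 k j hkj) (sub_nonneg.mpr (hmin j))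
  have hsplit : (A *ᵥ x) k = x i * ∑ j, A k j + ∑ j, A k j * (x j - x i) := by
    simp only [mulVec, dotProduct, mul_sub, sum_sub_distrib, mul_sum]
    ring_nf
  have hrow := hx k (hk ▸ hm)
  have hslack := mul_nonpos_of_nonpos_of_nonneg hm.le ((hL0.wddRow_iff k).mp (hA.1 k))
  have hdev := sum_nonpos fun j (_ : j ∈ univ) => hterm j
  refine ⟨fun hsdd => ?_, fun j hkj => ?_⟩
  · nlinarith [(hL0.sddRow_iff k).mp hsdd]
  · have hzero := (sum_eq_zero_iff_of_nonpos fun j _ => hterm j).mp (by linarith) j (mem_univ j)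
    rcases mul_eq_zero.mp hzero with h | h
    · exact absurd h hkj
    · linarith

theorem IsWCDD.eq_zero_of_mulVec_apply_eq_zero (hA : IsWCDD A) (hL0 : IsL0Matrix A)
    {x : n → ℝ} (hx : ∀ i, x i ≠ 0 → (A *ᵥ x) i = 0) : x = 0 := by
  refine le_antisymm ?_ (hA.nonneg_of_mulVec_nonneg hL0 fun i hi => (hx i hi.ne).ge)
  refine neg_nonneg.mp (hA.nonneg_of_mulVec_nonneg hL0 fun i hi => ?_)
  rw [mulVec_neg, Pi.neg_apply, hx i (neg_ne_zero.mp hi.ne), neg_zero]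

theorem IsWCDD.isUnit_det (hA : IsWCDD A) (hL0 : IsL0Matrix A) : IsUnit A.det := by
  refine isUnit_iff_ne_zero.mpr fun hdet => ?_
  obtain ⟨x, hx, hAx⟩ := exists_mulVec_eq_zero_iff.mpr hdet
  exact hx (hA.eq_zero_of_mulVec_apply_eq_zero hL0 fun i _ => congrFun hAx i)

theorem IsWCDD.inv_nonneg (hA : IsWCDD A) (hL0 : IsL0Matrix A) (i j : n) : 0 ≤ A⁻¹ i j := by
  have hcol : 0 ≤ fun k => A⁻¹ k j := hA.nonneg_of_mulVec_nonneg hL0 fun k _ => by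
    change 0 ≤ (A * A⁻¹) k j
    rw [mul_nonsing_inv A (hA.isUnit_det hL0), one_apply]
    positivity
  exact hcol i

theorem IsWCDD.mul_inv_apply_nonpos (hA : IsWCDD A) (hL0 : IsL0Matrix A) {k j : n}
    (hkj : A⁻¹ k j = 0) (l : n) : A k l * A⁻¹ l j ≤ 0 := by
  rcases eq_or_ne k l with rfl | hkl
  · simp [hkj]
  · exact mul_nonpos_of_nonpos_of_nonneg (hL0.1 k l hkl) (hA.inv_nonneg hL0 l j)

theorem IsWCDD.inv_diag_pos (hA : IsWCDD A) (hL0 : IsL0Matrix A) (i : n) : 0 < A⁻¹ i i := by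
  refine (hA.inv_nonneg hL0 i i).lt_of_ne' fun hii => ?_
  have hone : (A * A⁻¹) i i = 1 := by rw [mul_nonsing_inv A (hA.isUnit_det hL0), one_apply_eq]
  have := sum_nonpos fun l (_ : l ∈ univ) => hA.mul_inv_apply_nonpos hL0 hii l
  rw [← mul_apply, hone] at this
  exact one_pos.not_ge this

theorem IsWCDD.inv_apply_pos_of_ne_zero (hA : IsWCDD A) (hL0 : IsL0Matrix A) {k l j : n}
    (hkl : A k l ≠ 0) (hlj : 0 < A⁻¹ l j) : 0 < A⁻¹ k j := by
  rcases eq_or_ne k j with rfl | hkj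
  · exact hA.inv_diag_pos hL0 k
  rcases eq_or_ne k l with rfl | hkl'
  · exact hlj
  refine (hA.inv_nonneg hL0 k j).lt_of_ne' fun hzero => ?_
  have hneg := sum_neg' (s := univ) (fun m _ => hA.mul_inv_apply_nonpos hL0 hzero m)
    ⟨l, mem_univ l, mul_neg_of_neg_of_pos ((hL0.1 k l hkl').lt_of_ne hkl) hlj⟩
  rw [← mul_apply, mul_nonsing_inv A (hA.isUnit_det hL0), one_apply_ne hkj] at hneg
  exact hneg.false

/-- A row `k` that does not reach `j` has no edge into the rows that do, so for the truncated
column `x` we get `(A x)ₖ = (A A⁻¹)ₖⱼ = 0`. -/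
theorem IsWCDD.inv_apply_eq_zero_of_not_reflTransGen (hA : IsWCDD A) (hL0 : IsL0Matrix A)
    {i j : n} (hij : ¬ Relation.ReflTransGen (fun a b => A a b ≠ 0) i j) : A⁻¹ i j = 0 := by
  classical
  let R k := Relation.ReflTransGen (fun a b => A a b ≠ 0) k j
  let x : n → ℝ := fun k => if R k then 0 else A⁻¹ k j
  suffices x = 0 by simpa [x, R, hij] using congrFun this i
  refine hA.eq_zero_of_mulVec_apply_eq_zero hL0 fun k hk => ?_
  have hRk : ¬ R k := fun h => hk (if_pos h)
  have hrow : ∀ l, A k l * x l = A k l * A⁻¹ l j := fun l => by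
    by_cases hRl : R l
    · rw [not_not.mp fun hkl => hRk (hRl.head hkl), zero_mul, zero_mul]
    · simp [x, hRl]
  change ∑ l, A k l * x l = 0
  simp_rw [hrow, ← mul_apply, mul_nonsing_inv A (hA.isUnit_det hL0)]
  exact one_apply_ne fun hkj => hRk (hkj ▸ Relation.ReflTransGen.refl)

theorem IsWCDD.inv_apply_pos_iff (hA : IsWCDD A) (hL0 : IsL0Matrix A) {i j : n} :
    0 < A⁻¹ i j ↔ Relation.ReflTransGen (fun a b => A a b ≠ 0) i j := by
  refine ⟨fun hpos => ?_, fun hij => ?_⟩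
  · by_contra hij
    exact hpos.ne' (hA.inv_apply_eq_zero_of_not_reflTransGen hL0 hij)
  · induction hij using Relation.ReflTransGen.head_induction_on with
    | refl => exact hA.inv_diag_pos hL0 j
    | head hkl _ ih => exact hA.inv_apply_pos_of_ne_zero hL0 hkl ih

end WCDD

/-- A WCDD L0-matrix is nonsingular, has strictly positive diagonal
entries, its inverse has strictly positive diagonal entries, and for `i ≠ j` the entry
`(A⁻¹)_{ij}` is strictly positive iff there is a walk from `i` to `j` in graph `A`. -/
theorem statement7 {n : Type*} [Fintype n] [DecidableEq n] (A : Matrix n n ℝ)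
    (hWCDD : IsWCDD A) (hL0 : IsL0Matrix A) :
    IsUnit A.det ∧ (∀ i, 0 < A i i) ∧ (∀ i, 0 < A⁻¹ i i) ∧
      ∀ i j, i ≠ j → (0 < A⁻¹ i j ↔ MWalk A i j) := by
  refine ⟨hWCDD.isUnit_det hL0, hWCDD.diag_pos hL0, hWCDD.inv_diag_pos hL0, fun i j hij => ?_⟩
  rw [hWCDD.inv_apply_pos_iff hL0, Relation.reflTransGen_iff_eq_or_transGen, MWalk]
  exact or_iff_right (Ne.symm hij)

end
end

section
/- Let A be a WCDD L0-matrix and let B ≥ 0 entrywise be such that A − B is a WDD L0-matrix. Then for every row index i: if the i-th row sum of Id − A^{-1}B equals zero, then the i-th row sum of A − B equals zero. Equivalently, every SDD row of A − B (i.e., every row of A − B with strictly positive row sum) is a row of Id − A^{-1}B with strictly positive row sum. -/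
open Matrix Finset Filter Topology

noncomputable section

variable {N : ℕ}

section Aux

variable {n : Type*} [Fintype n] [DecidableEq n]

/-- For a WDD L0 matrix, row sums are nonnegative. -/
lemma rowsum_nonneg_of_wdd_l0 {C : Matrix n n ℝ} (hW : IsWDD C) (hL : IsL0Matrix C) (i : n) :
    0 ≤ ∑ j, C i j := by
  have h1 : ∑ j ∈ Finset.univ.erase i, |C i j| = -∑ j ∈ Finset.univ.erase i, C i j := by
    rw [← Finset.sum_neg_distrib]
    exact Finset.sum_congr rfl fun j hj =>
      abs_of_nonpos (hL.1 i j (Finset.ne_of_mem_erase hj).symm)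
  have h2 := hW i
  rw [WDDRow, h1, abs_of_nonneg (hL.2 i)] at h2
  have h3 : C i i + ∑ j ∈ Finset.univ.erase i, C i j = ∑ j, C i j :=
    Finset.add_sum_erase _ _ (Finset.mem_univ i)
  linarith

/-- For an L0 matrix, row `i` is SDD iff its row sum is positive. -/
lemma sddRow_iff_rowsum_pos {C : Matrix n n ℝ} (hL : IsL0Matrix C) (i : n) :
    SDDRow C i ↔ 0 < ∑ j, C i j := by
  have h1 : ∑ j ∈ Finset.univ.erase i, |C i j| = -∑ j ∈ Finset.univ.erase i, C i j := by
    rw [← Finset.sum_neg_distrib]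
    exact Finset.sum_congr rfl fun j hj =>
      abs_of_nonpos (hL.1 i j (Finset.ne_of_mem_erase hj).symm)
  have h3 : C i i + ∑ j ∈ Finset.univ.erase i, C i j = ∑ j, C i j :=
    Finset.add_sum_erase _ _ (Finset.mem_univ i)
  rw [SDDRow, h1, abs_of_nonneg (hL.2 i)]
  constructor <;> intro h <;> linarith

/-- Monotonicity of a WCDD L0 matrix: `A x ≥ 0 → x ≥ 0`. -/
lemma wcdd_mono {A : Matrix n n ℝ} (hW : IsWCDD A) (hL : IsL0Matrix A)
    (x : n → ℝ) (hx : ∀ i, 0 ≤ A.mulVec x i) : ∀ i, 0 ≤ x i := by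
  by_contra hc
  push_neg at hc
  obtain ⟨i0, hi0⟩ := hc
  obtain ⟨m, -, hm⟩ := Finset.exists_min_image Finset.univ x ⟨i0, Finset.mem_univ i0⟩
  have hm' : ∀ j, x m ≤ x j := fun j => hm j (Finset.mem_univ j)
  have hxm : x m < 0 := lt_of_le_of_lt (hm' i0) hi0
  -- key claim
  have key : ∀ i, x i = x m → ¬ SDDRow A i ∧ ∀ j, A i j ≠ 0 → x j = x m := by
    intro i hxi
    set s := Finset.univ.erase i with hs
    have hoff : ∀ j ∈ s, A i j ≤ 0 := fun j hj =>
      hL.1 i j (Finset.ne_of_mem_erase hj).symm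
    have h1 : ∀ j ∈ s, A i j * x j ≤ A i j * x m := fun j hj =>
      mul_le_mul_of_nonpos_left (hm' j) (hoff j hj)
    have hsum : ∑ j ∈ s, A i j * x j ≤ ∑ j ∈ s, A i j * x m := Finset.sum_le_sum h1
    have hmv : A.mulVec x i = A i i * x m + ∑ j ∈ s, A i j * x j := by
      rw [Matrix.mulVec, dotProduct, ← Finset.add_sum_erase _ _ (Finset.mem_univ i), hxi]
    have hr : 0 ≤ A i i + ∑ j ∈ s, A i j := by
      have := rowsum_nonneg_of_wdd_l0 hW.1 hL i
      rw [← Finset.add_sum_erase _ (A i) (Finset.mem_univ i)] at this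
      exact this
    have hup : A i i * x m + ∑ j ∈ s, A i j * x m = (A i i + ∑ j ∈ s, A i j) * x m := by
      rw [add_mul, Finset.sum_mul]
    have hle0 : (A i i + ∑ j ∈ s, A i j) * x m ≤ 0 :=
      mul_nonpos_of_nonneg_of_nonpos hr hxm.le
    have h0 : 0 ≤ A i i * x m + ∑ j ∈ s, A i j * x j := by rw [← hmv]; exact hx i
    -- equalities
    have hreq : A i i + ∑ j ∈ s, A i j = 0 := by
      rcases lt_or_eq_of_le hr with h | h
      · exfalso; nlinarith
      · exact h.symm
    have hnsdd : ¬ SDDRow A i := by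
      rw [sddRow_iff_rowsum_pos hL i, ← Finset.add_sum_erase _ (A i) (Finset.mem_univ i)]
      rw [← hs, hreq]; exact lt_irrefl 0
    refine ⟨hnsdd, ?_⟩
    have hseq : ∑ j ∈ s, A i j * x j = ∑ j ∈ s, A i j * x m := by nlinarith
    have hterm : ∀ j ∈ s, A i j * x j = A i j * x m := by
      intro j hj
      by_contra hne
      have hlt := Finset.sum_lt_sum h1 ⟨j, hj, lt_of_le_of_ne (h1 j hj) hne⟩
      exact absurd hseq (ne_of_lt hlt)
    intro j hAij
    by_cases hji : j = i
    · rw [hji]; exact hxi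
    · have hjs : j ∈ s := Finset.mem_erase.mpr ⟨hji, Finset.mem_univ j⟩
      have := hterm j hjs
      exact mul_left_cancel₀ hAij this
  -- propagate along walks
  have walk : ∀ a b, x a = x m → MWalk A a b → x b = x m := by
    intro a b ha hw
    induction hw with
    | single h => exact (key a ha).2 _ h
    | tail _ h ih => exact (key _ ih).2 _ h
  obtain ⟨j, hj, hwalk⟩ := hW.2 m (key m rfl).1
  exact (key j (walk m j rfl hwalk)).1 hj

end Aux

/-- Let `A` be a WCDD L0-matrix and `B ≥ 0` with `A − B` a WDD
L0-matrix. Then every row of `Id − A⁻¹B` with zero row sum is a row of `A − B` with zero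
row sum; equivalently every SDD row of `A − B` (strictly positive row sum) has strictly
positive row sum in `Id − A⁻¹B`. -/
theorem statement8 {n : Type*} [Fintype n] [DecidableEq n] (A B : Matrix n n ℝ)
    (hWCDD : IsWCDD A) (hL0 : IsL0Matrix A)
    (hB : ∀ i j, 0 ≤ B i j)
    (hABwdd : IsWDD (A - B)) (hABl0 : IsL0Matrix (A - B)) :
    (∀ i, (∑ j, ((1 : Matrix n n ℝ) - A⁻¹ * B) i j) = 0 → (∑ j, (A - B) i j) = 0) ∧
    ∀ i, 0 < ∑ j, (A - B) i j → 0 < ∑ j, ((1 : Matrix n n ℝ) - A⁻¹ * B) i j := by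
  by_cases hdet : IsUnit A.det
  case neg =>
    have hinv : A⁻¹ = 0 := Matrix.nonsing_inv_apply_not_isUnit A hdet
    have hone : ∀ i, (∑ j, ((1 : Matrix n n ℝ) - A⁻¹ * B) i j) = 1 := by
      intro i
      simp [hinv, Matrix.one_apply]
    constructor
    · intro i h; rw [hone i] at h; norm_num at h
    · intro i _; rw [hone i]; norm_num
  case pos =>
    have hAAinv : A * A⁻¹ = 1 := Matrix.mul_nonsing_inv A hdet
    have hAinvA : A⁻¹ * A = 1 := Matrix.nonsing_inv_mul A hdet
    -- A⁻¹ ≥ 0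
    have hinv_nonneg : ∀ i j, 0 ≤ A⁻¹ i j := by
      intro i j
      have hx : ∀ k, 0 ≤ A.mulVec (fun l => A⁻¹ l j) k := by
        intro k
        have : A.mulVec (fun l => A⁻¹ l j) k = (A * A⁻¹) k j := by
          simp [Matrix.mulVec, Matrix.mul_apply, dotProduct]
        rw [this, hAAinv, Matrix.one_apply]
        positivity
      exact wcdd_mono hWCDD hL0 _ hx i
    -- positive diagonal of A⁻¹
    have hdiag_pos : ∀ i, 0 < A⁻¹ i i := by
      intro i
      have h1 : ∑ k, A⁻¹ i k * A k i = 1 := by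
        have := congrArg (fun M => M i i) hAinvA
        simpa [Matrix.mul_apply, Matrix.one_apply] using this
      rw [← Finset.add_sum_erase _ (fun k => A⁻¹ i k * A k i) (Finset.mem_univ i)] at h1
      have hrest : ∑ k ∈ Finset.univ.erase i, A⁻¹ i k * A k i ≤ 0 :=
        Finset.sum_nonpos fun k hk =>
          mul_nonpos_of_nonneg_of_nonpos (hinv_nonneg i k)
            (hL0.1 k i (Finset.ne_of_mem_erase hk))
      have hprod : 0 < A⁻¹ i i * A i i := by linarith
      rcases lt_or_eq_of_le (hinv_nonneg i i) with h | h
      · exact h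
      · exfalso; rw [← h, zero_mul] at hprod; exact lt_irrefl 0 hprod
    -- row sums identity
    have hid : ∀ i, (∑ j, ((1 : Matrix n n ℝ) - A⁻¹ * B) i j)
        = ∑ k, A⁻¹ i k * ∑ j, (A - B) k j := by
      intro i
      have h1 : ∑ k, A⁻¹ i k * ∑ j, (A - B) k j
          = ∑ j, (A⁻¹ * A) i j - ∑ j, (A⁻¹ * B) i j := by
        simp only [Matrix.sub_apply, Finset.mul_sum, mul_sub, Finset.sum_sub_distrib,
          Matrix.mul_apply]
        rw [Finset.sum_comm, Finset.sum_comm (f := fun k j => A⁻¹ i k * B k j)]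
      rw [h1, hAinvA]
      simp [Matrix.sub_apply, Finset.sum_sub_distrib]
    have hrnonneg : ∀ k, 0 ≤ ∑ j, (A - B) k j := fun k =>
      rowsum_nonneg_of_wdd_l0 hABwdd hABl0 k
    have hterm_nonneg : ∀ i k, 0 ≤ A⁻¹ i k * ∑ j, (A - B) k j := fun i k =>
      mul_nonneg (hinv_nonneg i k) (hrnonneg k)
    constructor
    · intro i h
      rw [hid i] at h
      have := (Finset.sum_eq_zero_iff_of_nonneg
        (fun k _ => hterm_nonneg i k)).mp h i (Finset.mem_univ i)
      have hdiag := hdiag_pos i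
      rcases mul_eq_zero.mp this with h' | h'
      · exact absurd h' (ne_of_gt hdiag)
      · exact h'
    · intro i h
      rw [hid i]
      have h1 : 0 < A⁻¹ i i * ∑ j, (A - B) i j := mul_pos (hdiag_pos i) h
      calc 0 < A⁻¹ i i * ∑ j, (A - B) i j := h1
        _ ≤ ∑ k, A⁻¹ i k * ∑ j, (A - B) k j :=
          Finset.single_le_sum (fun k _ => hterm_nonneg i k) (Finset.mem_univ i)

end
end

section
/- Assume (A0), (A1), (A2) and the identity-row condition. Let v* ∈ ℝ^G and let φ* := (ψ*, δ*(v*)) be the strategy induced by v*, where ψ* is the indicator of {x ∈ G_{<0} : (Lv* + f)(x) ≤ (Mv* − v*)(x)}. Then v* solves the discrete QVI system if and only if 𝔸(φ*,φ*)v* = 𝔹(φ*)v* + ℂ(φ*,φ*). -/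
open Matrix Finset Filter Topology

noncomputable section

variable {N : ℕ}

namespace GameSetup

variable {N : ℕ}

lemma delta_spec (s : GameSetup N) (v : Fin (2*N+1) → ℝ) (i : Fin (2*N+1)) :
    s.δstar v i ∈ s.Z i ∧
    (s.B fun _ => s.δstar v i).mulVec v i - s.c (fun _ => s.δstar v i) i = s.M v i := by
  classical
  obtain ⟨d, hd, hdv⟩ := Finset.exists_mem_eq_sup' (s.hZ_ne i)
    (fun d => (s.B fun _ => d).mulVec v i - s.c (fun _ => d) i)
  set F := (s.Z i).filter (fun d =>
      (s.B fun _ => d).mulVec v i - s.c (fun _ => d) i = s.M v i) with hF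
  have hFne : F.Nonempty := ⟨d, Finset.mem_filter.2 ⟨hd, hdv.symm⟩⟩
  have hds : s.δstar v i = F.max' hFne := by
    rw [δstar, ← hF, ← Finset.coe_max' hFne]
    rfl
  have hmem := Finset.max'_mem F hFne
  rw [hds]
  exact ⟨(Finset.mem_filter.1 hmem).1, (Finset.mem_filter.1 hmem).2⟩

lemma δstar_adm (s : GameSetup N) (v : Fin (2*N+1) → ℝ) : s.Adm (s.δstar v) :=
  fun i => (s.delta_spec v i).1

lemma M_attained (s : GameSetup N) (v : Fin (2*N+1) → ℝ) (i : Fin (2*N+1)) :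
    (s.B (s.δstar v)).mulVec v i - s.c (s.δstar v) i = s.M v i := by
  have h := s.delta_spec v i
  have hB := s.hB_rd (s.δstar v) (fun _ => s.δstar v i) i rfl
  have hc := s.hc_rd (s.δstar v) (fun _ => s.δstar v i) i rfl
  have hm : (s.B (s.δstar v)).mulVec v i = (s.B fun _ => s.δstar v i).mulVec v i := by
    simp only [Matrix.mulVec, hB]
  rw [hm, hc]
  exact h.2

lemma idrow_mulVec (s : GameSetup N) (hid : s.IdRow) (δ : Fin (2*N+1) → ℝ)
    (hδ : s.Adm δ) (i : Fin (2*N+1)) (h0 : δ i = 0) (v : Fin (2*N+1) → ℝ) :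
    (s.B δ).mulVec v i = v i := by
  have h := hid δ hδ i h0
  simp only [Matrix.mulVec, h]
  simp [dotProduct, Matrix.one_apply, Finset.sum_ite_eq]

lemma M_lt_self (s : GameSetup N) (hid : s.IdRow) (v : Fin (2*N+1) → ℝ)
    (i : Fin (2*N+1)) (hx : 0 ≤ s.x i) : s.M v i < v i := by
  have h0 : s.δstar v i = 0 := by
    have h := (s.delta_spec v i).1
    rw [s.hZ_zero i hx] at h
    simpa using h
  have hM := s.M_attained v i
  rw [s.idrow_mulVec hid _ (s.δstar_adm v) i h0] at hM
  have hc := s.hc_pos _ (s.δstar_adm v) i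
  linarith

lemma smat_mulVec (w : Fin (2*N+1) → ℝ) : (Smat N).mulVec w = fun i => w i.rev := by
  funext i
  simp [Smat, Matrix.mulVec, dotProduct, ite_mul, Finset.sum_ite_eq']

lemma psi_mulVec (s : GameSetup N) (φ : s.Strategy) (w : Fin (2*N+1) → ℝ) (i : Fin (2*N+1)) :
    (s.Psi φ).mulVec w i = (if i ∈ φ.I then (1:ℝ) else 0) * w i := by
  simp [Psi, Matrix.mulVec_diagonal]

lemma sps_mulVec (s : GameSetup N) (φ : s.Strategy) (w : Fin (2*N+1) → ℝ) (i : Fin (2*N+1)) :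
    (Smat N * s.Psi φ * Smat N).mulVec w i = (if i.rev ∈ φ.I then (1:ℝ) else 0) * w i := by
  simp only [← Matrix.mulVec_mulVec, smat_mulVec, psi_mulVec, Fin.rev_rev]

end GameSetup
namespace GameSetup

variable {N : ℕ}

lemma H_apply (s : GameSetup N) (v : Fin (2*N+1) → ℝ) (i : Fin (2*N+1)) :
    s.H v i = (s.B (s.δstar v)).mulVec (fun j => v j.rev) i.rev
      + s.g (s.δstar v ∘ Fin.rev) i := by
  simp only [H, Pi.add_apply, ← Matrix.mulVec_mulVec, smat_mulVec]

lemma key (s : GameSetup N) (v : Fin (2*N+1) → ℝ) (φ : s.Strategy)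
    (hδ : φ.δ = s.δstar v) (hdisj : ∀ i, i ∈ φ.I → i.rev ∉ φ.I) :
    ((s.Amat φ φ).mulVec v = (s.Bmat φ).mulVec v + s.Cvec φ φ) ↔
      ((∀ i ∈ φ.I, s.M v i = v i) ∧ (∀ i, i.rev ∈ φ.I → s.H v i = v i) ∧
       (∀ i, i ∉ φ.I → i.rev ∉ φ.I → s.L.mulVec v i + s.f i = 0)) := by
  classical
  have hrow : ∀ i : Fin (2*N+1),
      ((s.Amat φ φ).mulVec v i = ((s.Bmat φ).mulVec v + s.Cvec φ φ) i) ↔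
      (if i ∈ φ.I then s.M v i = v i
       else if i.rev ∈ φ.I then s.H v i = v i
       else s.L.mulVec v i + s.f i = 0) := by
    intro i
    have hA : (s.Amat φ φ).mulVec v i =
        v i - (1 - (if i ∈ φ.I then (1:ℝ) else 0) - (if i.rev ∈ φ.I then (1:ℝ) else 0))
          * (v i + s.L.mulVec v i)
        - (if i ∈ φ.I then (1:ℝ) else 0) * (s.B φ.δ).mulVec v i := by
      simp only [Amat, Matrix.sub_mulVec, Matrix.add_mulVec, Matrix.one_mulVec,
        ← Matrix.mulVec_mulVec, smat_mulVec, psi_mulVec, Fin.rev_rev,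
        Pi.add_apply, Pi.sub_apply]
      ring
    have hBv : (s.Bmat φ).mulVec v i = (if i.rev ∈ φ.I then (1:ℝ) else 0) *
        (s.B φ.δ).mulVec (fun j => v j.rev) i.rev := by
      simp only [Bmat, ← Matrix.mulVec_mulVec, smat_mulVec, psi_mulVec, Fin.rev_rev]
    have hC : s.Cvec φ φ i =
        (1 - (if i ∈ φ.I then (1:ℝ) else 0) - (if i.rev ∈ φ.I then (1:ℝ) else 0)) * s.f i
        - (if i ∈ φ.I then (1:ℝ) else 0) * s.c φ.δ i
        + (if i.rev ∈ φ.I then (1:ℝ) else 0) * s.g (φ.δ ∘ Fin.rev) i := by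
      simp only [Cvec, Matrix.sub_mulVec, Matrix.add_mulVec, Matrix.one_mulVec,
        ← Matrix.mulVec_mulVec, smat_mulVec, psi_mulVec, Fin.rev_rev,
        Pi.add_apply, Pi.sub_apply]
      ring
    rw [Pi.add_apply, hA, hBv, hC]
    have hM : (s.B φ.δ).mulVec v i - s.c φ.δ i = s.M v i := by
      rw [hδ]; exact s.M_attained v i
    have hH : s.H v i = (s.B φ.δ).mulVec (fun j => v j.rev) i.rev
        + s.g (φ.δ ∘ Fin.rev) i := by
      rw [hδ]; exact s.H_apply v i
    by_cases hi : i ∈ φ.I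
    · have hri : i.rev ∉ φ.I := hdisj i hi
      simp only [hi, hri, if_true, if_false]
      constructor <;> intro h <;> linarith
    · by_cases hri : i.rev ∈ φ.I
      · simp only [hi, hri, if_true, if_false]
        constructor <;> intro h <;> linarith
      · simp only [hi, hri, if_true, if_false]
        constructor <;> intro h <;> linarith
  rw [funext_iff]
  constructor
  · intro h
    refine ⟨fun i hi => ?_, fun i hri => ?_, fun i hi hri => ?_⟩
    · have h' := (hrow i).1 (h i); rwa [if_pos hi] at h'
    · have hi : i ∉ φ.I := fun hmem => (hdisj i hmem) hri
      have h' := (hrow i).1 (h i); rwa [if_neg hi, if_pos hri] at h'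
    · have h' := (hrow i).1 (h i); rwa [if_neg hi, if_neg hri] at h'
  · rintro ⟨h1, h2, h3⟩ i
    refine (hrow i).2 ?_
    by_cases hi : i ∈ φ.I
    · rw [if_pos hi]; exact h1 i hi
    · rw [if_neg hi]
      by_cases hri : i.rev ∈ φ.I
      · rw [if_pos hri]; exact h2 i hri
      · rw [if_neg hri]; exact h3 i hi hri

end GameSetup

/-- Under (A0)–(A2) and the identity-row condition, `v*` solves the
discrete QVI system iff `𝔸(φ*,φ*) v* = 𝔹(φ*) v* + ℂ(φ*,φ*)` for the induced strategy
`φ* = (ψ*, δ*(v*))`. -/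
theorem statement9 (hN : 1 ≤ N) (s : GameSetup N)
    (hA0 : s.A0) (hA1 : s.A1) (hA2 : s.A2) (hid : s.IdRow)
    (vstar : Fin (2*N+1) → ℝ) (φ : s.Strategy) (hφ : s.IsInduced vstar φ) :
    s.SolvesQVI vstar ↔
      (s.Amat φ φ).mulVec vstar = (s.Bmat φ).mulVec vstar + s.Cvec φ φ := by
  obtain ⟨hI, hδ⟩ := hφ
  have hrev : ∀ i : Fin (2*N+1), s.x i.rev = -(s.x i) := s.hx_sym
  have hdisj : ∀ i, i ∈ φ.I → i.rev ∉ φ.I := by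
    intro i hi hri
    have h1 := φ.hI i hi
    have h2 := φ.hI _ hri
    rw [hrev] at h2; linarith
  have hmemI : ∀ i : Fin (2*N+1), i ∈ φ.I ↔
      (s.x i < 0 ∧ s.L.mulVec vstar i + s.f i ≤ s.M vstar i - vstar i) := by
    intro i
    rw [hI, GameSetup.indI]
    simp [Finset.mem_filter]
  have hnotI : ∀ i : Fin (2*N+1), 0 ≤ s.x i → i ∉ φ.I := by
    intro i hx hi
    exact absurd ((hmemI i).1 hi).1 (by linarith)
  rw [s.key vstar φ hδ hdisj]
  constructor
  · rintro ⟨ha, hb, hc⟩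
    have h1 : ∀ i ∈ φ.I, s.M vstar i = vstar i := by
      intro i hi
      obtain ⟨hx, hle⟩ := (hmemI i).1 hi
      have hxr : (0:ℝ) ≤ s.x i.rev := by rw [hrev]; linarith
      have hMr := s.M_lt_self hid vstar i.rev hxr
      have hmax := hc i (by linarith)
      rw [max_eq_right hle] at hmax
      linarith
    refine ⟨h1, fun i hri => ?_, fun i hi hri => ?_⟩
    · have h := hb i (by rw [h1 i.rev hri]; ring)
      linarith
    · rcases lt_trichotomy (s.x i) 0 with hx | hx | hx
      · have hlt : s.M vstar i - vstar i < s.L.mulVec vstar i + s.f i := by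
          by_contra hcon; push_neg at hcon
          exact hi ((hmemI i).2 ⟨hx, hcon⟩)
        have hxr : (0:ℝ) ≤ s.x i.rev := by rw [hrev]; linarith
        have hMr := s.M_lt_self hid vstar i.rev hxr
        have hmax := hc i (by linarith)
        rwa [max_eq_left hlt.le] at hmax
      · have hrr : i.rev = i := s.hx_mono.injective (by rw [hrev, hx]; norm_num)
        have hMi := s.M_lt_self hid vstar i (le_of_eq hx.symm)
        have hmax := hc i (by rw [hrr]; linarith)
        rcases max_choice (s.L.mulVec vstar i + s.f i) (s.M vstar i - vstar i) with h | h
        · rw [h] at hmax; exact hmax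
        · rw [h] at hmax; linarith
      · have hxr : s.x i.rev < 0 := by rw [hrev]; linarith
        have hMi := s.M_lt_self hid vstar i hx.le
        have hmaxr := hc i.rev (by rw [Fin.rev_rev]; linarith)
        have hltr : s.M vstar i.rev - vstar i.rev <
            s.L.mulVec vstar i.rev + s.f i.rev := by
          by_contra hcon; push_neg at hcon
          exact hri ((hmemI i.rev).2 ⟨hxr, hcon⟩)
        rw [max_eq_left hltr.le] at hmaxr
        have hMr : s.M vstar i.rev - vstar i.rev < 0 := by linarith
        have hmax := hc i hMr
        rcases max_choice (s.L.mulVec vstar i + s.f i) (s.M vstar i - vstar i) with h | h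
        · rw [h] at hmax; exact hmax
        · rw [h] at hmax; linarith
  · rintro ⟨h1, h2, h3⟩
    have ha : ∀ i, s.M vstar i - vstar i ≤ 0 := by
      intro i
      by_cases hi : i ∈ φ.I
      · linarith [h1 i hi]
      · rcases le_or_gt 0 (s.x i) with hx | hx
        · linarith [s.M_lt_self hid vstar i hx]
        · have hri : i.rev ∉ φ.I := hnotI i.rev (by rw [hrev]; linarith)
          have hLf := h3 i hi hri
          have hlt : ¬(s.L.mulVec vstar i + s.f i ≤ s.M vstar i - vstar i) :=
            fun hle => hi ((hmemI i).2 ⟨hx, hle⟩)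
          push_neg at hlt
          linarith
    refine ⟨ha, fun i hM0 => ?_, fun i hMlt => ?_⟩
    · have hxr : s.x i.rev < 0 := by
        by_contra hcon; push_neg at hcon
        linarith [s.M_lt_self hid vstar i.rev hcon]
      have hri : i.rev ∈ φ.I := by
        by_contra hcon
        have hii : i ∉ φ.I := hnotI i (by nlinarith [hrev i])
        have hLf := h3 i.rev hcon (by rw [Fin.rev_rev]; exact hii)
        exact hcon ((hmemI i.rev).2 ⟨hxr, by linarith⟩)
      linarith [h2 i hri]
    · have hri : i.rev ∉ φ.I := fun h => by linarith [h1 i.rev h]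
      by_cases hi : i ∈ φ.I
      · obtain ⟨hx, hle⟩ := (hmemI i).1 hi
        have hMi := h1 i hi
        rw [max_eq_right hle]
        linarith
      · rw [max_eq_left (by linarith [ha i, h3 i hi hri])]
        exact h3 i hi hri

end
end

section
/- Assume (A0'), (A1), (A2) and let (v^k) be an algorithm sequence. If the matrix sequence (𝔸(φ^k,φ^{k+1})^{-1}𝔹(φ^k))_k and the vector sequence (𝔸(φ^k,φ^{k+1})^{-1}ℂ(φ^k,φ^{k+1}))_k both converge, then the sequence (v^k) converges in ℝ^G. -/
open Matrix Finset Filter Topology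

noncomputable section

variable {N : ℕ}

section Aux14

variable {N : ℕ} (s : GameSetup N)

lemma Smat_mul_apply (M : Matrix (Fin (2*N+1)) (Fin (2*N+1)) ℝ) (i j : Fin (2*N+1)) :
    (Smat N * M) i j = M i.rev j := by
  simp only [Matrix.mul_apply, Smat, Matrix.of_apply]
  rw [Finset.sum_eq_single i.rev]
  · simp
  · intro b _ hb; simp [hb]
  · simp

lemma mul_Smat_apply (M : Matrix (Fin (2*N+1)) (Fin (2*N+1)) ℝ) (i j : Fin (2*N+1)) :
    (M * Smat N) i j = M i j.rev := by
  simp only [Matrix.mul_apply, Smat, Matrix.of_apply]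
  rw [Finset.sum_eq_single j.rev]
  · simp
  · intro b _ hb
    have : j ≠ b.rev := by
      intro h; apply hb; rw [h, Fin.rev_rev]
    simp [this]
  · simp

lemma Bmat_apply (φ : s.Strategy) (i j : Fin (2*N+1)) :
    s.Bmat φ i j = (if i.rev ∈ φ.I then (1:ℝ) else 0) * s.B φ.δ i.rev j.rev := by
  unfold GameSetup.Bmat
  rw [mul_Smat_apply, show Smat N * s.Psi φ * s.B φ.δ = Smat N * (s.Psi φ * s.B φ.δ) from
    Matrix.mul_assoc _ _ _, Smat_mul_apply]
  unfold GameSetup.Psi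
  rw [Matrix.diagonal_mul]

lemma PsiB_apply (φ : s.Strategy) (δ : Fin (2*N+1) → ℝ) (i j : Fin (2*N+1)) :
    (s.Psi φ * s.B δ) i j = (if i ∈ φ.I then (1:ℝ) else 0) * s.B δ i j := by
  unfold GameSetup.Psi
  rw [Matrix.diagonal_mul]

lemma strat_disj (φ φ' : s.Strategy) (i : Fin (2*N+1)) (h1 : i ∈ φ'.I) (h2 : i.rev ∈ φ.I) :
    False := by
  have a := φ'.hI i h1
  have b := φ.hI _ h2
  rw [s.hx_sym] at b
  linarith

lemma SPsiS (φ : s.Strategy) :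
    Smat N * s.Psi φ * Smat N =
      Matrix.diagonal (fun i => if i.rev ∈ φ.I then (1:ℝ) else 0) := by
  ext i j
  rw [mul_Smat_apply, Smat_mul_apply]
  unfold GameSetup.Psi
  rcases eq_or_ne i j with rfl | hij
  · simp [Matrix.diagonal_apply_eq]
  · have : i.rev ≠ j.rev := fun h => hij (Fin.rev_injective h)
    rw [Matrix.diagonal_apply_ne _ this, Matrix.diagonal_apply_ne _ hij]

lemma Amat_apply (φ φ' : s.Strategy) (i j : Fin (2*N+1)) :
    s.Amat φ φ' i j =
      if i ∈ φ'.I then (if i = j then (1:ℝ) else 0) - s.B φ'.δ i j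
      else if i.rev ∈ φ.I then (if i = j then (1:ℝ) else 0)
      else -(s.L i j) := by
  unfold GameSetup.Amat
  rw [SPsiS]
  have h1 : (1 : Matrix (Fin (2*N+1)) (Fin (2*N+1)) ℝ) - s.Psi φ'
      - Matrix.diagonal (fun i => if i.rev ∈ φ.I then (1:ℝ) else 0)
      = Matrix.diagonal (fun i => 1 - (if i ∈ φ'.I then (1:ℝ) else 0)
          - (if i.rev ∈ φ.I then (1:ℝ) else 0)) := by
    unfold GameSetup.Psi
    rw [← Matrix.diagonal_one, ← Matrix.diagonal_sub, ← Matrix.diagonal_sub]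
  rw [h1]
  simp only [Matrix.sub_apply, Matrix.diagonal_mul, PsiB_apply, Matrix.add_apply,
    Matrix.one_apply]
  by_cases hI' : i ∈ φ'.I
  · have hrev : i.rev ∉ φ.I := fun h => strat_disj s φ φ' i hI' h
    simp [hI', hrev]
  · by_cases hrev : i.rev ∈ φ.I
    · simp [hI', hrev]
    · simp only [if_neg hI', if_neg hrev]
      by_cases hij : i = j <;> simp [hij]

/-- Entries of `B δ` are nonnegative for admissible `δ`. -/
lemma B_nonneg (hA1 : s.A1) (hA2 : s.A2) {δ : Fin (2*N+1) → ℝ} (hδ : s.Adm δ)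
    (i j : Fin (2*N+1)) : 0 ≤ s.B δ i j := by
  rcases eq_or_ne i j with rfl | hij
  · exact hA2 δ hδ i
  · have h := ((hA1.2 δ hδ).2.1) i j hij
    simp only [Matrix.sub_apply, Matrix.one_apply_ne hij] at h
    linarith

/-- Row sums of `B δ` are at most one for admissible `δ`. -/
lemma B_rowsum (hA1 : s.A1) (hA2 : s.A2) {δ : Fin (2*N+1) → ℝ} (hδ : s.Adm δ)
    (i : Fin (2*N+1)) : ∑ j, s.B δ i j ≤ 1 := by
  have hwdd := (hA1.2 δ hδ).1 i
  unfold WDDRow at hwdd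
  have hdiag : |(1 - s.B δ) i i| = 1 - s.B δ i i := by
    rw [abs_of_nonneg ((hA1.2 δ hδ).2.2 i)]; simp [Matrix.sub_apply]
  have habs : ∀ j ∈ Finset.univ.erase i, |(1 - s.B δ) i j| = s.B δ i j := by
    intro j hj
    have hij : j ≠ i := (Finset.mem_erase.1 hj).1
    have : (1 - s.B δ) i j = -(s.B δ i j) := by
      simp [Matrix.sub_apply, Matrix.one_apply_ne (Ne.symm hij)]
    rw [this, abs_neg, abs_of_nonneg (B_nonneg s hA1 hA2 hδ i j)]
  rw [Finset.sum_congr rfl habs] at hwdd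
  have hsplit : ∑ j, s.B δ i j = s.B δ i i + ∑ j ∈ Finset.univ.erase i, s.B δ i j := by
    rw [Finset.add_sum_erase _ _ (Finset.mem_univ i)]
  simp only [Matrix.sub_apply, Matrix.one_apply_eq] at hdiag hwdd
  linarith

/-- Row sums of `-L` are strictly positive. -/
lemma negL_rowsum (hA1 : s.A1) (i : Fin (2*N+1)) : 0 < ∑ j, (-(s.L i j)) := by
  have hsdd := hA1.1.1 i
  unfold SDDRow at hsdd
  have hdiag : |(-s.L) i i| = -(s.L i i) := abs_of_nonneg (hA1.1.2.2 i)
  have habs : ∀ j ∈ Finset.univ.erase i, |(-s.L) i j| = -(-(s.L i j)) := by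
    intro j hj
    have hij : i ≠ j := fun h => (Finset.mem_erase.1 hj).1 h.symm
    exact abs_of_nonpos (hA1.1.2.1 i j hij)
  rw [Finset.sum_congr rfl habs] at hsdd
  have hsplit : ∑ j, (-(s.L i j)) = -(s.L i i) + ∑ j ∈ Finset.univ.erase i, (-(s.L i j)) :=
    (Finset.add_sum_erase _ (fun j => -(s.L i j)) (Finset.mem_univ i)).symm
  simp only [Matrix.neg_apply] at hsdd hdiag
  have : ∑ j ∈ Finset.univ.erase i, -(-(s.L i j)) = - ∑ j ∈ Finset.univ.erase i, (-(s.L i j)) := by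
    rw [← Finset.sum_neg_distrib]
  rw [this] at hsdd
  rw [hsplit]
  linarith [hsdd, hdiag.symm.le]

lemma negL_offdiag (hA1 : s.A1) {i j : Fin (2*N+1)} (hij : i ≠ j) : -(s.L i j) ≤ 0 :=
  hA1.1.2.1 i j hij

/-- Propagation of a predicate along a walk. -/
lemma walk_escape {α : Type*} {r : α → α → Prop} {P : α → Prop}
    (hcl : ∀ a b, P a → r a b → P b) {i j : α} (h : Relation.TransGen r i j) (hi : P i) :
    P j := by
  induction h with
  | single h => exact hcl _ _ hi h
  | tail _ h ih => exact hcl _ _ ih h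

lemma rev_sum (g : Fin (2*N+1) → ℝ) : ∑ j : Fin (2*N+1), g j.rev = ∑ j, g j :=
  Fintype.sum_equiv Fin.revPerm (fun (j : Fin (2*N+1)) => g j.rev) g (fun x => by rw [Fin.revPerm_apply])

/-- Core positivity lemma: `𝔸 v ≥ 0` implies `v ≥ 0`. -/
lemma pos_core (hA0' : s.A0') (hA1 : s.A1) (hA2 : s.A2) (φ φ' : s.Strategy)
    {v : Fin (2*N+1) → ℝ} (hr : ∀ i, 0 ≤ (s.Amat φ φ').mulVec v i) : ∀ i, 0 ≤ v i := by
  by_contra hneg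
  push_neg at hneg
  obtain ⟨i₁, hi₁⟩ := hneg
  obtain ⟨i₀, -, hmin⟩ := Finset.exists_min_image Finset.univ v ⟨i₁, Finset.mem_univ _⟩
  set m := v i₀ with hm
  have hm0 : m < 0 := lt_of_le_of_lt (hmin i₁ (Finset.mem_univ _)) hi₁
  have hml : ∀ j, m ≤ v j := fun j => hmin j (Finset.mem_univ _)
  have hrow : ∀ i, 0 ≤ ∑ j, s.Amat φ φ' i j * v j := by
    intro i; have := hr i; rwa [Matrix.mulVec, dotProduct] at this
  -- free rows
  have key_free : ∀ i, i ∉ φ'.I → i.rev ∉ φ.I → v i = m → False := by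
    intro i hI' hrev hvi
    have h0 := hrow i
    have hA : ∀ j, s.Amat φ φ' i j = -(s.L i j) := by
      intro j; rw [Amat_apply]; simp [hI', hrev]
    rw [Finset.sum_congr rfl (fun j _ => by rw [hA j])] at h0
    have hb : ∀ j ∈ Finset.univ, -(s.L i j) * v j ≤ -(s.L i j) * m := by
      intro j _
      rcases eq_or_ne i j with rfl | hij
      · rw [hvi]
      · exact mul_le_mul_of_nonpos_left (hml j) (negL_offdiag s hA1 hij)
    have h1 : ∑ j, -(s.L i j) * v j ≤ (∑ j, -(s.L i j)) * m := by
      rw [Finset.sum_mul]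
      exact Finset.sum_le_sum hb
    have h2 : (∑ j, -(s.L i j)) * m < 0 := mul_neg_of_pos_of_neg (negL_rowsum s hA1 i) hm0
    linarith
  -- rows in -I
  have key_mI : ∀ i, i.rev ∈ φ.I → 0 ≤ v i := by
    intro i hrev
    have h0 := hrow i
    have hI' : i ∉ φ'.I := fun h => strat_disj s φ φ' i h hrev
    have hA : ∀ j, s.Amat φ φ' i j = if i = j then (1:ℝ) else 0 := by
      intro j; rw [Amat_apply]; simp [hI', hrev]
    rw [Finset.sum_congr rfl (fun j _ => by rw [hA j])] at h0
    simpa [ite_mul, Finset.sum_ite_eq] using h0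
  -- rows in Ī: closure
  have key_I : ∀ i, i ∈ φ'.I → v i = m → ∀ j, s.B φ'.δ i j ≠ 0 → v j = m := by
    intro i hI' hvi j hBj
    have h0 := hrow i
    have hA : ∀ j, s.Amat φ φ' i j = (if i = j then (1:ℝ) else 0) - s.B φ'.δ i j := by
      intro j; rw [Amat_apply]; simp [hI']
    rw [Finset.sum_congr rfl (fun j _ => by rw [hA j])] at h0
    simp only [sub_mul, Finset.sum_sub_distrib, ite_mul, one_mul, zero_mul,
      Finset.sum_ite_eq, Finset.mem_univ, if_true] at h0
    -- h0 : 0 ≤ v i - ∑ j, B i j * v j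
    have hBnn := fun j => B_nonneg s hA1 hA2 φ'.hδ i j
    have hterm : ∀ j ∈ Finset.univ, (0:ℝ) ≤ s.B φ'.δ i j * (v j - m) :=
      fun j _ => mul_nonneg (hBnn j) (by linarith [hml j])
    have hsum : ∑ j, s.B φ'.δ i j * (v j - m) ≤ 0 := by
      have hexp : ∑ j, s.B φ'.δ i j * (v j - m)
          = (∑ j, s.B φ'.δ i j * v j) - (∑ j, s.B φ'.δ i j) * m := by
        rw [Finset.sum_mul, ← Finset.sum_sub_distrib]
        exact Finset.sum_congr rfl (fun j _ => by ring)
      have hrs : (∑ j, s.B φ'.δ i j) * m ≥ m := by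
        have := B_rowsum s hA1 hA2 φ'.hδ i
        nlinarith
      rw [hexp, hvi] at *
      linarith
    have hz := (Finset.sum_eq_zero_iff_of_nonneg hterm).1 (le_antisymm hsum
      (Finset.sum_nonneg hterm)) j (Finset.mem_univ j)
    rcases mul_eq_zero.1 hz with h | h
    · exact absurd h hBj
    · linarith [hml j]
  -- i₀ must be in φ'.I
  have hI0 : i₀ ∈ φ'.I := by
    by_contra hI'
    rcases Classical.em (i₀.rev ∈ φ.I) with hrev | hrev
    · exact absurd (key_mI i₀ hrev) (not_le.2 hm0)
    · exact key_free i₀ hI' hrev rfl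
  obtain ⟨j, hj, hwalk⟩ := hA0' φ φ' i₀ (Or.inl hI0)
  push_neg at hj
  -- walk propagation
  have hcl : ∀ a b, (v a = m ∧ a ∈ φ'.I) →
      (s.Psi φ' * s.B φ'.δ + Smat N * s.Psi φ * s.B φ.δ * Smat N) a b ≠ 0 →
      (v b = m ∧ b ∈ φ'.I) := by
    intro a b ⟨hva, haI⟩ hedge
    have harev : a.rev ∉ φ.I := fun h => strat_disj s φ φ' a haI h
    have hBm : (Smat N * s.Psi φ * s.B φ.δ * Smat N) a b = 0 := by
      have := Bmat_apply s φ a b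
      unfold GameSetup.Bmat at this
      rw [this, if_neg harev, zero_mul]
    rw [Matrix.add_apply, hBm, add_zero, PsiB_apply, if_pos haI, one_mul] at hedge
    have hvb := key_I a haI hva b hedge
    refine ⟨hvb, ?_⟩
    by_contra hbI'
    rcases Classical.em (b.rev ∈ φ.I) with hbrev | hbrev
    · have := key_mI b hbrev; linarith [hvb ▸ this]
    · exact key_free b hbI' hbrev hvb
  have := walk_escape hcl hwalk ⟨rfl, hI0⟩
  exact hj.1 this.2

/-- The matrix `𝔸(φ,φ')` is nonsingular. -/
lemma A_unit (hA0' : s.A0') (hA1 : s.A1) (hA2 : s.A2) (φ φ' : s.Strategy) :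
    IsUnit (s.Amat φ φ').det := by
  rw [isUnit_iff_ne_zero]
  intro hdet
  obtain ⟨v, hv0, hv⟩ := Matrix.exists_mulVec_eq_zero_iff.2 hdet
  have h1 : ∀ i, 0 ≤ v i := pos_core s hA0' hA1 hA2 φ φ' (fun i => by rw [hv]; simp)
  have h2 : ∀ i, 0 ≤ (-v) i :=
    pos_core s hA0' hA1 hA2 φ φ' (v := -v) (fun i => by rw [Matrix.mulVec_neg, hv]; simp)
  exact hv0 (funext fun i => le_antisymm (by simpa using h2 i) (h1 i))

lemma pow_entry_nonneg {M : Matrix (Fin (2*N+1)) (Fin (2*N+1)) ℝ} (h : ∀ i j, 0 ≤ M i j) :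
    ∀ n i j, 0 ≤ (M^n) i j := by
  intro n
  induction n with
  | zero =>
    intro i j
    rcases eq_or_ne i j with rfl | hij
    · simp [Matrix.one_apply]
    · simp [Matrix.one_apply_ne hij]
  | succ n ih =>
    intro i j
    rw [pow_succ, Matrix.mul_apply]
    exact Finset.sum_nonneg (fun k _ => mul_nonneg (ih i k) (h k j))

/-- Key contraction properties of `T = 𝔸⁻¹𝔹`. -/
lemma key_lemma (hA0' : s.A0') (hA1 : s.A1) (hA2 : s.A2) (φ φ' : s.Strategy) :
    (∀ i j, 0 ≤ ((s.Amat φ φ')⁻¹ * s.Bmat φ) i j) ∧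
    (∀ i, ∑ j, ((s.Amat φ φ')⁻¹ * s.Bmat φ) i j ≤ 1) ∧
    ∃ n θ, 0 < n ∧ 0 ≤ θ ∧ θ < 1 ∧
      ∀ i, ∑ j, (((s.Amat φ φ')⁻¹ * s.Bmat φ)^n) i j ≤ θ := by
  classical
  set A := s.Amat φ φ' with hA
  set Bm := s.Bmat φ with hBm
  set T := A⁻¹ * Bm with hT
  have hdet := A_unit s hA0' hA1 hA2 φ φ'
  have hAT : A * T = Bm := by
    rw [hT, ← Matrix.mul_assoc, Matrix.mul_nonsing_inv _ hdet, Matrix.one_mul]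
  have hBm0 : ∀ i j, 0 ≤ Bm i j := by
    intro i j
    rw [hBm, Bmat_apply]
    by_cases h : i.rev ∈ φ.I
    · simpa [h] using B_nonneg s hA1 hA2 φ.hδ i.rev j.rev
    · simp [h]
  have hT0 : ∀ i j, 0 ≤ T i j := by
    intro i j
    have hcol : ∀ i0, (A *ᵥ (fun k => T k j)) i0 = Bm i0 j := by
      intro i0
      rw [Matrix.mulVec, dotProduct, ← hAT, Matrix.mul_apply]
    exact pos_core s hA0' hA1 hA2 φ φ' (v := fun k => T k j)
      (fun i0 => by rw [hcol]; exact hBm0 _ _) i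
  -- the vectors w k = T^k 1
  set w : ℕ → Fin (2*N+1) → ℝ := fun k => (T^k) *ᵥ (fun _ => 1) with hw
  have hw0 : ∀ i, w 0 i = 1 := by intro i; simp [hw]
  have hw1 : w 1 = T *ᵥ (fun _ => 1) := by rw [hw]; simp
  have hwsucc : ∀ k, w (k+1) = T *ᵥ (w k) := by
    intro k
    rw [hw]
    simp only
    rw [pow_succ', ← Matrix.mulVec_mulVec]
  have hAw : ∀ k, A *ᵥ (w (k+1)) = Bm *ᵥ (w k) := by
    intro k
    rw [hwsucc k, Matrix.mulVec_mulVec, hAT]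
  have hrowA : ∀ (x : Fin (2*N+1) → ℝ) i, (A *ᵥ x) i = ∑ j, A i j * x j :=
    fun x i => by rw [Matrix.mulVec, dotProduct]
  have hBrow0 : ∀ (x : Fin (2*N+1) → ℝ) i, i.rev ∉ φ.I → (Bm *ᵥ x) i = 0 := by
    intro x i h
    rw [Matrix.mulVec, dotProduct]
    apply Finset.sum_eq_zero
    intro j _
    rw [hBm, Bmat_apply, if_neg h, zero_mul, zero_mul]
  have hBrow : ∀ (x : Fin (2*N+1) → ℝ) i, i.rev ∈ φ.I →
      (Bm *ᵥ x) i = ∑ j, s.B φ.δ i.rev j.rev * x j := by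
    intro x i h
    rw [Matrix.mulVec, dotProduct]
    exact Finset.sum_congr rfl (fun j _ => by rw [hBm, Bmat_apply, if_pos h, one_mul])
  have hBrevsum : ∀ i : Fin (2*N+1), ∑ j : Fin (2*N+1), s.B φ.δ i.rev j.rev ≤ 1 := by
    intro i
    rw [rev_sum (fun j : Fin (2*N+1) => s.B φ.δ i.rev j)]
    exact B_rowsum s hA1 hA2 φ.hδ i.rev
  -- w 1 ≤ 1
  have hw1le : ∀ i, w 1 i ≤ 1 := by
    have hrs : ∀ i, 0 ≤ (A *ᵥ ((fun _ => (1:ℝ)) - w 1)) i := by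
      intro i
      rw [Matrix.mulVec_sub]
      have hAw0 : A *ᵥ w 1 = Bm *ᵥ w 0 := hAw 0
      have hw0' : w 0 = fun _ => (1:ℝ) := funext hw0
      rw [Pi.sub_apply, hAw0, hw0']
      by_cases hrev : i.rev ∈ φ.I
      · have hI' : i ∉ φ'.I := fun h => strat_disj s φ φ' i h hrev
        rw [hBrow _ i hrev, hrowA]
        have h3 : ∑ j, A i j * 1 = 1 := by
          rw [Finset.sum_congr rfl (fun j _ => by
            rw [hA, Amat_apply, if_neg hI', if_pos hrev])]
          simp
        rw [h3]
        have : ∑ j : Fin (2*N+1), s.B φ.δ i.rev j.rev * 1 = ∑ j : Fin (2*N+1), s.B φ.δ i.rev j.rev := by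
          simp
        rw [this]
        linarith [hBrevsum i]
      · rw [hBrow0 _ i hrev, hrowA, sub_zero]
        by_cases hI' : i ∈ φ'.I
        · have h3 : ∑ j, A i j * 1 = 1 - ∑ j, s.B φ'.δ i j := by
            rw [Finset.sum_congr rfl (fun j _ => by
              rw [hA, Amat_apply, if_pos hI'])]
            simp only [mul_one, Finset.sum_sub_distrib]
            congr 1
            simp
          rw [h3]
          linarith [B_rowsum s hA1 hA2 φ'.hδ i]
        · have h3 : ∑ j, A i j * 1 = ∑ j, -(s.L i j) := by
            apply Finset.sum_congr rfl
            intro j _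
            rw [hA, Amat_apply, if_neg hI', if_neg hrev, mul_one]
          rw [h3]
          exact (negL_rowsum s hA1 i).le
    have := pos_core s hA0' hA1 hA2 φ φ' hrs
    intro i
    have h := this i
    simp only [Pi.sub_apply] at h
    linarith
  have hTmono : ∀ x y : Fin (2*N+1) → ℝ, (∀ j, x j ≤ y j) → ∀ i, (T *ᵥ x) i ≤ (T *ᵥ y) i := by
    intro x y hxy i
    rw [Matrix.mulVec, dotProduct, Matrix.mulVec, dotProduct]
    exact Finset.sum_le_sum (fun j _ => mul_le_mul_of_nonneg_left (hxy j) (hT0 i j))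
  have hwle : ∀ k i, w k i ≤ 1 := by
    intro k
    induction k with
    | zero => exact fun i => (hw0 i).le
    | succ k ih =>
      intro i
      calc w (k+1) i = (T *ᵥ w k) i := by rw [hwsucc]
        _ ≤ (T *ᵥ fun _ => 1) i := hTmono _ _ ih i
        _ = w 1 i := by rw [← hw1]
        _ ≤ 1 := hw1le i
  have hwnn : ∀ k i, 0 ≤ w k i := by
    intro k
    induction k with
    | zero => exact fun i => by rw [hw0]; norm_num
    | succ k ih =>
      intro i
      rw [hwsucc, Matrix.mulVec, dotProduct]
      exact Finset.sum_nonneg (fun j _ => mul_nonneg (hT0 i j) (ih j))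
  have hwanti : ∀ k i, w (k+1) i ≤ w k i := by
    intro k
    induction k with
    | zero => intro i; rw [hw0]; exact hwle 1 i
    | succ k ih =>
      intro i
      calc w (k+1+1) i = (T *ᵥ w (k+1)) i := by rw [hwsucc]
        _ ≤ (T *ᵥ w k) i := hTmono _ _ ih i
        _ = w (k+1) i := (congrFun (hwsucc k) i).symm
  -- strictness on free rows
  have sfree : ∀ k i, i ∉ φ'.I → i.rev ∉ φ.I → w (k+1) i < 1 := by
    intro k i hI' hrev
    rcases lt_or_ge (w (k+1) i) 1 with h | h
    · exact h
    exfalso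
    have heq : w (k+1) i = 1 := le_antisymm (hwle _ i) h
    have h0 : (A *ᵥ w (k+1)) i = 0 := by rw [hAw k, hBrow0 _ i hrev]
    rw [hrowA] at h0
    have hAij : ∀ j, A i j = -(s.L i j) := fun j => by
      rw [hA, Amat_apply, if_neg hI', if_neg hrev]
    rw [Finset.sum_congr rfl (fun j _ => by rw [hAij j])] at h0
    have hb : ∀ j ∈ Finset.univ, -(s.L i j) * 1 ≤ -(s.L i j) * w (k+1) j := by
      intro j _
      rcases eq_or_ne i j with rfl | hij
      · rw [heq]
      · exact mul_le_mul_of_nonpos_left (hwle (k+1) j) (negL_offdiag s hA1 hij)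
    have h1 : (∑ j, -(s.L i j)) * 1 ≤ ∑ j, -(s.L i j) * w (k+1) j := by
      rw [Finset.sum_mul]
      exact Finset.sum_le_sum hb
    rw [h0, mul_one] at h1
    linarith [negL_rowsum s hA1 i]
  -- propagation on Ī rows
  have sI : ∀ k i, i ∈ φ'.I → w (k+1) i = 1 → ∀ j, s.B φ'.δ i j ≠ 0 → w (k+1) j = 1 := by
    intro k i hI' heq j hBj
    have h0 : (A *ᵥ w (k+1)) i = 0 := by
      rw [hAw k, hBrow0 _ i (fun h => strat_disj s φ φ' i hI' h)]
    rw [hrowA] at h0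
    have hAij : ∀ j, A i j = (if i = j then (1:ℝ) else 0) - s.B φ'.δ i j := fun j => by
      rw [hA, Amat_apply, if_pos hI']
    rw [Finset.sum_congr rfl (fun j _ => by rw [hAij j])] at h0
    simp only [sub_mul, Finset.sum_sub_distrib, ite_mul, one_mul, zero_mul,
      Finset.sum_ite_eq, Finset.mem_univ, if_true] at h0
    have hBw : ∑ j, s.B φ'.δ i j * w (k+1) j = 1 := by rw [← heq]; linarith
    have hBnn := fun j => B_nonneg s hA1 hA2 φ'.hδ i j
    have hterm : ∀ j ∈ Finset.univ, (0:ℝ) ≤ s.B φ'.δ i j * (1 - w (k+1) j) :=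
      fun j _ => mul_nonneg (hBnn j) (by linarith [hwle (k+1) j])
    have hsum : ∑ j, s.B φ'.δ i j * (1 - w (k+1) j) ≤ 0 := by
      have hexp : ∑ j, s.B φ'.δ i j * (1 - w (k+1) j)
          = (∑ j, s.B φ'.δ i j) - ∑ j, s.B φ'.δ i j * w (k+1) j := by
        rw [← Finset.sum_sub_distrib]
        exact Finset.sum_congr rfl (fun j _ => by ring)
      rw [hexp, hBw]
      linarith [B_rowsum s hA1 hA2 φ'.hδ i]
    have hz := (Finset.sum_eq_zero_iff_of_nonneg hterm).1
      (le_antisymm hsum (Finset.sum_nonneg hterm)) j (Finset.mem_univ j)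
    rcases mul_eq_zero.1 hz with h | h
    · exact absurd h hBj
    · linarith
  -- propagation on -I rows (goes back one step in time)
  have smI : ∀ k i, i.rev ∈ φ.I → w (k+1) i = 1 → ∀ j, s.B φ.δ i.rev j.rev ≠ 0 →
      w k j = 1 := by
    intro k i hrev heq j hBj
    have hI' : i ∉ φ'.I := fun h => strat_disj s φ φ' i h hrev
    have hl : (A *ᵥ w (k+1)) i = w (k+1) i := by
      rw [hrowA]
      rw [Finset.sum_congr rfl (fun j _ => by rw [hA, Amat_apply, if_neg hI', if_pos hrev])]
      simp [ite_mul]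
    have h0 : w (k+1) i = ∑ j, s.B φ.δ i.rev j.rev * w k j := by
      rw [← hl, hAw k, hBrow _ i hrev]
    have hBnn : ∀ j : Fin (2*N+1), 0 ≤ s.B φ.δ i.rev j.rev :=
      fun j => B_nonneg s hA1 hA2 φ.hδ i.rev j.rev
    have hterm : ∀ j ∈ Finset.univ, (0:ℝ) ≤ s.B φ.δ i.rev j.rev * (1 - w k j) :=
      fun j _ => mul_nonneg (hBnn j) (by linarith [hwle k j])
    have hsum : ∑ j, s.B φ.δ i.rev j.rev * (1 - w k j) ≤ 0 := by
      have hexp : ∑ j, s.B φ.δ i.rev j.rev * (1 - w k j)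
          = (∑ j : Fin (2*N+1), s.B φ.δ i.rev j.rev)
            - ∑ j, s.B φ.δ i.rev j.rev * w k j := by
        rw [← Finset.sum_sub_distrib]
        exact Finset.sum_congr rfl (fun j _ => by ring)
      rw [hexp, ← h0, heq]
      linarith [hBrevsum i]
    have hz := (Finset.sum_eq_zero_iff_of_nonneg hterm).1
      (le_antisymm hsum (Finset.sum_nonneg hterm)) j (Finset.mem_univ j)
    rcases mul_eq_zero.1 hz with h | h
    · exact absurd h hBj
    · linarith
  -- the sets where w k = 1 stabilize
  set E : ℕ → Finset (Fin (2*N+1)) := fun k => Finset.univ.filter (fun i => w k i = 1)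
    with hEdef
  have hEmem : ∀ k i, i ∈ E k ↔ w k i = 1 := by
    intro k i
    rw [hEdef]
    simp
  have hEsucc : ∀ k, E (k+1) ⊆ E k := by
    intro k i hi
    rw [hEmem] at hi ⊢
    have := hwanti k i
    have := hwle k i
    linarith
  have hEanti : ∀ k l, k ≤ l → E l ⊆ E k := by
    intro k l hkl
    induction l, hkl using Nat.le_induction with
    | base => exact subset_rfl
    | succ l hkl ih => exact (hEsucc l).trans ih
  obtain ⟨k0, hk0⟩ : ∃ k0, (E k0).card = sInf (Set.range fun k => (E k).card) :=
    Nat.sInf_mem (Set.range_nonempty _)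
  have hstab : ∀ m, k0 ≤ m → E m = E k0 := by
    intro m hm
    apply Finset.eq_of_subset_of_card_le (hEanti k0 m hm)
    rw [hk0]
    exact Nat.sInf_le ⟨m, rfl⟩
  -- E (k0 + 1) is empty
  have hempty : ∀ i, w (k0+1) i < 1 := by
    intro i
    rcases lt_or_ge (w (k0+1) i) 1 with h | h
    · exact h
    exfalso
    have heq : w (k0+1) i = 1 := le_antisymm (hwle _ i) h
    have hflag : i ∈ φ'.I ∨ i.rev ∈ φ.I := by
      by_contra hc
      push_neg at hc
      exact absurd heq (ne_of_lt (sfree k0 i hc.1 hc.2))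
    obtain ⟨j, hj, hwalk⟩ := hA0' φ φ' i hflag
    have hcl : ∀ a b, (w (k0+1) a = 1 ∧ (a ∈ φ'.I ∨ a.rev ∈ φ.I)) →
        ((s.Psi φ' * s.B φ'.δ + Smat N * s.Psi φ * s.B φ.δ * Smat N) a b ≠ 0) →
        (w (k0+1) b = 1 ∧ (b ∈ φ'.I ∨ b.rev ∈ φ.I)) := by
      intro a b hab hedge
      obtain ⟨hwa, hfa⟩ := hab
      have hwb : w (k0+1) b = 1 := by
        rcases hfa with haI' | harev
        · have harev : a.rev ∉ φ.I := fun h => strat_disj s φ φ' a haI' h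
          have hBmab : (Smat N * s.Psi φ * s.B φ.δ * Smat N) a b = 0 := by
            have hb := Bmat_apply s φ a b
            unfold GameSetup.Bmat at hb
            rw [hb, if_neg harev, zero_mul]
          rw [Matrix.add_apply, hBmab, add_zero, PsiB_apply, if_pos haI', one_mul] at hedge
          exact sI k0 a haI' hwa b hedge
        · have haI' : a ∉ φ'.I := fun h => strat_disj s φ φ' a h harev
          have hPab : (s.Psi φ' * s.B φ'.δ) a b = 0 := by
            rw [PsiB_apply, if_neg haI', zero_mul]
          have hBab : (Smat N * s.Psi φ * s.B φ.δ * Smat N) a b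
              = s.B φ.δ a.rev b.rev := by
            have hb := Bmat_apply s φ a b
            unfold GameSetup.Bmat at hb
            rw [hb, if_pos harev, one_mul]
          rw [Matrix.add_apply, hPab, zero_add, hBab] at hedge
          have hwkb : w k0 b = 1 := smI k0 a harev hwa b hedge
          have hbE : b ∈ E k0 := (hEmem k0 b).2 hwkb
          rw [← hstab (k0+1) (Nat.le_succ k0)] at hbE
          exact (hEmem (k0+1) b).1 hbE
      refine ⟨hwb, ?_⟩
      by_contra hc
      push_neg at hc
      exact absurd hwb (ne_of_lt (sfree k0 b hc.1 hc.2))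
    exact hj ((walk_escape hcl hwalk ⟨heq, hflag⟩).2)
  -- conclude
  have hrowsumT : ∀ k i, ∑ j, (T^k) i j = w k i := by
    intro k i
    rw [hw]
    simp only
    rw [Matrix.mulVec, dotProduct]
    simp
  refine ⟨hT0, fun i => ?_, ?_⟩
  · have : ∑ j, T i j = w 1 i := by
      have := hrowsumT 1 i
      rwa [pow_one] at this
    rw [this]
    exact hw1le i
  · have hnuniv : (Finset.univ : Finset (Fin (2*N+1))).Nonempty :=
      ⟨⟨0, by omega⟩, Finset.mem_univ _⟩
    refine ⟨k0 + 1, Finset.univ.sup' hnuniv (w (k0+1)), Nat.succ_pos _, ?_, ?_, ?_⟩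
    · exact le_trans (hwnn (k0+1) (⟨0, by omega⟩ : Fin (2*N+1)))
        (Finset.le_sup' _ (Finset.mem_univ (⟨0, by omega⟩ : Fin (2*N+1))))
    · rw [Finset.sup'_lt_iff]
      exact fun i _ => hempty i
    · intro i
      rw [hrowsumT (k0+1) i]
      exact Finset.le_sup' _ (Finset.mem_univ i)

/-- There are finitely many strategies. -/
lemma strategy_finite : Finite s.Strategy := by
  classical
  let f : s.Strategy → Finset (Fin (2*N+1)) × ((i : Fin (2*N+1)) → {x : ℝ // x ∈ s.Z i}) :=
    fun φ => (φ.I, fun i => ⟨φ.δ i, φ.hδ i⟩)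
  have hinj : Function.Injective f := by
    intro φ1 φ2 h
    have h1 : φ1.I = φ2.I := congrArg Prod.fst h
    have h2 : φ1.δ = φ2.δ := funext fun i =>
      congrArg Subtype.val (congrFun (congrArg Prod.snd h) i)
    cases φ1
    cases φ2
    simp only at h1 h2
    subst h1
    subst h2
    rfl
  exact Finite.of_injective f hinj

lemma eventually_const_of_finite_range {X : Type*} [TopologicalSpace X] [T1Space X]
    {f : ℕ → X} {a : X} (hfin : (Set.range f).Finite)
    (h : Filter.Tendsto f Filter.atTop (nhds a)) : ∃ K, ∀ k, K ≤ k → f k = a := by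
  have hclosed : IsClosed (Set.range f \ {a}) := (hfin.subset Set.diff_subset).isClosed
  have hmem : a ∈ (Set.range f \ {a})ᶜ := fun h' => h'.2 rfl
  have hev : ∀ᶠ k in Filter.atTop, f k ∈ (Set.range f \ {a})ᶜ :=
    h.eventually_mem (hclosed.isOpen_compl.mem_nhds hmem)
  obtain ⟨K, hK⟩ := Filter.eventually_atTop.1 hev
  refine ⟨K, fun k hk => ?_⟩
  by_contra hne
  exact hK k hk ⟨⟨k, rfl⟩, hne⟩

lemma mulVec_norm_le {M : Matrix (Fin (2*N+1)) (Fin (2*N+1)) ℝ} {c : ℝ}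
    (h0 : ∀ i j, 0 ≤ M i j) (hc : 0 ≤ c) (hrow : ∀ i, ∑ j, M i j ≤ c)
    (x : Fin (2*N+1) → ℝ) : ‖M *ᵥ x‖ ≤ c * ‖x‖ := by
  rw [pi_norm_le_iff_of_nonneg (mul_nonneg hc (norm_nonneg x))]
  intro i
  rw [Matrix.mulVec, dotProduct, Real.norm_eq_abs]
  calc |∑ j, M i j * x j| ≤ ∑ j, |M i j * x j| := Finset.abs_sum_le_sum_abs _ _
    _ ≤ ∑ j, M i j * ‖x‖ := Finset.sum_le_sum (fun j _ => by
        rw [abs_mul, abs_of_nonneg (h0 i j)]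
        refine mul_le_mul_of_nonneg_left ?_ (h0 i j)
        rw [← Real.norm_eq_abs]
        exact norm_le_pi_norm x j)
    _ = (∑ j, M i j) * ‖x‖ := (Finset.sum_mul _ _ _).symm
    _ ≤ c * ‖x‖ := mul_le_mul_of_nonneg_right (hrow i) (norm_nonneg x)

end Aux14

/-- Under (A0'), (A1), (A2), if along an algorithm sequence the
matrices `𝔸(φ^k,φ^{k+1})⁻¹ 𝔹(φ^k)` and the vectors `𝔸(φ^k,φ^{k+1})⁻¹ ℂ(φ^k,φ^{k+1})`
both converge, then the payoff sequence `(v^k)` converges. -/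
theorem statement14 (hN : 1 ≤ N) (s : GameSetup N)
    (hA0' : s.A0') (hA1 : s.A1) (hA2 : s.A2)
    (v : ℕ → Fin (2*N+1) → ℝ) (φ : ℕ → s.Strategy) (halg : s.IsAlgSeq v φ)
    (hmat : ∃ T : Matrix (Fin (2*N+1)) (Fin (2*N+1)) ℝ,
      Filter.Tendsto (fun k => (s.Amat (φ k) (φ (k+1)))⁻¹ * s.Bmat (φ k))
        Filter.atTop (nhds T))
    (hvec : ∃ b : Fin (2*N+1) → ℝ,
      Filter.Tendsto (fun k => (s.Amat (φ k) (φ (k+1)))⁻¹.mulVec (s.Cvec (φ k) (φ (k+1))))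
        Filter.atTop (nhds b)) :
    ∃ vlim : Fin (2*N+1) → ℝ, Filter.Tendsto v Filter.atTop (nhds vlim) := by
  classical
  obtain ⟨Tlim, hTlim⟩ := hmat
  obtain ⟨blim, hblim⟩ := hvec
  haveI : Finite s.Strategy := strategy_finite s
  have hfinT : (Set.range fun k => (s.Amat (φ k) (φ (k+1)))⁻¹ * s.Bmat (φ k)).Finite := by
    apply (Set.finite_range (fun p : s.Strategy × s.Strategy =>
      (s.Amat p.1 p.2)⁻¹ * s.Bmat p.1)).subset
    rintro x ⟨k, rfl⟩
    exact ⟨(φ k, φ (k+1)), rfl⟩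
  have hfinb : (Set.range fun k =>
      (s.Amat (φ k) (φ (k+1)))⁻¹.mulVec (s.Cvec (φ k) (φ (k+1)))).Finite := by
    apply (Set.finite_range (fun p : s.Strategy × s.Strategy =>
      (s.Amat p.1 p.2)⁻¹.mulVec (s.Cvec p.1 p.2))).subset
    rintro x ⟨k, rfl⟩
    exact ⟨(φ k, φ (k+1)), rfl⟩
  obtain ⟨K1, hK1⟩ := eventually_const_of_finite_range hfinT hTlim
  obtain ⟨K2, hK2⟩ := eventually_const_of_finite_range hfinb hblim
  set K := max K1 K2 with hKdef
  set T := (s.Amat (φ K) (φ (K+1)))⁻¹ * s.Bmat (φ K) with hTdef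
  set b := (s.Amat (φ K) (φ (K+1)))⁻¹.mulVec (s.Cvec (φ K) (φ (K+1))) with hbdef
  have hTk : ∀ k, K ≤ k → (s.Amat (φ k) (φ (k+1)))⁻¹ * s.Bmat (φ k) = T := by
    intro k hk
    rw [hK1 k (le_trans (le_max_left _ _) hk), hTdef, hK1 K (le_max_left _ _)]
  have hbk : ∀ k, K ≤ k →
      (s.Amat (φ k) (φ (k+1)))⁻¹.mulVec (s.Cvec (φ k) (φ (k+1))) = b := by
    intro k hk
    rw [hK2 k (le_trans (le_max_right _ _) hk), hbdef, hK2 K (le_max_right _ _)]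
  set F : (Fin (2*N+1) → ℝ) → (Fin (2*N+1) → ℝ) := fun x => T *ᵥ x + b with hF
  have hrec : ∀ k, K ≤ k → v (k+1) = F (v k) := by
    intro k hk
    have hdet := A_unit s hA0' hA1 hA2 (φ k) (φ (k+1))
    have h1 : v (k+1) = (s.Amat (φ k) (φ (k+1)))⁻¹ *ᵥ ((s.Amat (φ k) (φ (k+1))) *ᵥ v (k+1)) := by
      rw [Matrix.mulVec_mulVec, Matrix.nonsing_inv_mul _ hdet, Matrix.one_mulVec]
    rw [h1, halg.2 k, Matrix.mulVec_add, Matrix.mulVec_mulVec, hTk k hk, hbk k hk, hF]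
  obtain ⟨hT0, hTrow, n, θ, hn, hθ0, hθ1, hθrow⟩ :=
    key_lemma s hA0' hA1 hA2 (φ K) (φ (K+1))
  -- Lipschitz estimates
  have hFiter : ∀ (m : ℕ) x y, F^[m] x - F^[m] y = (T^m) *ᵥ (x - y) := by
    intro m
    induction m with
    | zero => intro x y; simp [Matrix.one_mulVec]
    | succ m ih =>
      intro x y
      rw [Function.iterate_succ_apply' F m x, Function.iterate_succ_apply' F m y, hF]
      simp only
      have : T *ᵥ F^[m] x + b - (T *ᵥ F^[m] y + b) = T *ᵥ (F^[m] x - F^[m] y) := by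
        rw [Matrix.mulVec_sub]
        abel
      rw [this, ih x y, Matrix.mulVec_mulVec, ← pow_succ']
  have hF1 : ∀ x y : Fin (2*N+1) → ℝ, dist (F x) (F y) ≤ dist x y := by
    intro x y
    rw [dist_eq_norm, dist_eq_norm]
    have h := hFiter 1 x y
    simp only [Function.iterate_one, pow_one] at h
    rw [h]
    simpa using mulVec_norm_le hT0 zero_le_one hTrow (x - y)
  have hFr : ∀ (r : ℕ) (x y : Fin (2*N+1) → ℝ), dist (F^[r] x) (F^[r] y) ≤ dist x y := by
    intro r
    induction r with
    | zero => intro x y; simp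
    | succ r ih =>
      intro x y
      rw [Function.iterate_succ_apply' F r x, Function.iterate_succ_apply' F r y]
      exact le_trans (hF1 _ _) (ih x y)
  have hglip : LipschitzWith ⟨θ, hθ0⟩ (F^[n]) := by
    apply LipschitzWith.of_dist_le_mul
    intro x y
    rw [dist_eq_norm, dist_eq_norm, hFiter n x y]
    exact_mod_cast mulVec_norm_le (pow_entry_nonneg hT0 n) hθ0 hθrow (x - y)
  have hcontr : ContractingWith ⟨θ, hθ0⟩ (F^[n]) := ⟨by exact_mod_cast hθ1, hglip⟩
  set u := ContractingWith.fixedPoint (F^[n]) hcontr with hu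
  have hgu : F^[n] u = u := hcontr.fixedPoint_isFixedPt
  have hFu : F u = u := by
    have h1 : F^[n] (F u) = F u := by
      rw [← Function.iterate_succ_apply F n u, Function.iterate_succ_apply' F n u, hgu]
    have := hcontr.fixedPoint_unique (x := F u) h1
    rw [this, ← hu]
  have hgiter : ∀ q, (F^[n])^[q] u = u := fun q => (Function.IsFixedPt.iterate hgu q)
  have hFiterfix : ∀ r, F^[r] u = u := fun r => (Function.IsFixedPt.iterate hFu r)
  have hK0 : ∀ m, v (K + m) = F^[m] (v K) := by
    intro m
    induction m with
    | zero => simp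
    | succ m ih =>
      rw [← Nat.add_assoc, hrec (K + m) (Nat.le_add_right K m),
        Function.iterate_succ_apply' F m (v K), ih]
  have hdist : ∀ m, dist (v (K + m)) u ≤ θ ^ (m / n) * dist (v K) u := by
    intro m
    have hm : n * (m / n) + m % n = m := Nat.div_add_mod m n
    have hiter : F^[m] (v K) = (F^[n])^[m / n] (F^[m % n] (v K)) := by
      conv_lhs => rw [← hm]
      rw [Function.iterate_add_apply, Function.iterate_mul]
    calc dist (v (K+m)) u
        = dist ((F^[n])^[m / n] (F^[m % n] (v K))) ((F^[n])^[m / n] u) := by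
          rw [hK0 m, hiter, hgiter]
      _ ≤ θ ^ (m / n) * dist (F^[m % n] (v K)) u := by
          have h := (hglip.iterate (m / n)).dist_le_mul (F^[m % n] (v K)) u
          exact_mod_cast h
      _ ≤ θ ^ (m / n) * dist (v K) u := by
          have hd : dist (F^[m % n] (v K)) u ≤ dist (v K) u := by
            calc dist (F^[m % n] (v K)) u = dist (F^[m % n] (v K)) (F^[m % n] u) := by
                  rw [hFiterfix]
              _ ≤ dist (v K) u := hFr _ _ _
          exact mul_le_mul_of_nonneg_left hd (pow_nonneg hθ0 _)
  have hdivtop : Filter.Tendsto (fun m : ℕ => m / n) Filter.atTop Filter.atTop := by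
    apply Filter.tendsto_atTop_atTop.2
    intro q
    refine ⟨n * q, fun m hm => ?_⟩
    rw [Nat.le_div_iff_mul_le hn]
    calc q * n = n * q := Nat.mul_comm q n
      _ ≤ m := hm
  have htends0 : Filter.Tendsto (fun m => θ ^ (m / n) * dist (v K) u)
      Filter.atTop (nhds 0) := by
    have h1 := tendsto_pow_atTop_nhds_zero_of_lt_one hθ0 hθ1
    have := (h1.comp hdivtop).mul_const (dist (v K) u)
    simpa using this
  have hconv : Filter.Tendsto (fun m => v (K + m)) Filter.atTop (nhds u) :=
    tendsto_iff_dist_tendsto_zero.2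
      (squeeze_zero (fun m => dist_nonneg) hdist htends0)
  exact ⟨u, (Filter.tendsto_add_atTop_iff_nat K).1
    (Filter.Tendsto.congr (fun m => congrArg v (Nat.add_comm K m)) hconv)⟩

end
end
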